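/- arXiv:2406.09978 — 11 statements merged into one kernel-verified Lean document; each statement's English description precedes it below -/
import Mathlib

section
/- Let P be a preorder, m > 1 a natural number, and Q ⊆ P with int(Q) ≥ 1 − 1/(m+1). Then Q is m-linked, i.e., every subset of Q of size at most m has a lower bound in P. -/
open Classical

/-- `istar q` : the maximal size of a set `F` of indices such that
`{q i : i ∈ F}` has a lower bound in the forcing notion `P`. -/
noncomputable def istar {P : Type*} [Preorder P] {n : ℕ} (q : Fin n → P) : ℕ :=
  sSup {m : ℕ | ∃ F : Finset (Fin n), F.card = m ∧ ∃ r : P, ∀ i ∈ F, r ≤ q i}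

/-- The intersection number of `Q` in `P`, with `int(∅) = 1`. -/
noncomputable def intNum {P : Type*} [Preorder P] (Q : Set P) : ℝ :=
  if Q = ∅ then 1
  else sInf {x : ℝ | ∃ n : ℕ, 0 < n ∧
    ∃ q : Fin n → P, (∀ i, q i ∈ Q) ∧ x = (istar q : ℝ) / (n : ℝ)}

/-- If `m > 1` and `int(Q) ≥ 1 - 1/(m+1)`, then `Q` is `m`-linked:
every subset of `Q` of size at most `m` has a lower bound in `P`.
(`P` is a forcing notion, in particular nonempty.) -/
theorem stmt2 {P : Type*} [Preorder P] [Nonempty P] (Q : Set P) (m : ℕ) (hm : 1 < m)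
    (h : 1 - 1 / ((m : ℝ) + 1) ≤ intNum Q) :
    ∀ F : Finset P, ↑F ⊆ Q → F.card ≤ m → ∃ r : P, ∀ p ∈ F, r ≤ p := by
  intro F hFQ hFm
  rcases Nat.lt_or_ge F.card 2 with h2 | h2
  · -- trivial cases card = 0 or 1
    interval_cases hc : F.card
    · obtain ⟨r⟩ := (inferInstance : Nonempty P)
      exact ⟨r, by simp [Finset.card_eq_zero.mp hc]⟩
    · obtain ⟨p, hp⟩ := Finset.card_eq_one.mp hc
      exact ⟨p, by simp [hp]⟩
  by_contra hno
  push_neg at hno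
  set k := F.card with hk
  have hkpos : 0 < k := by omega
  set q : Fin k → P := fun i => ((F.equivFin.symm i : F) : P) with hq
  have hqmem : ∀ i, q i ∈ Q := fun i => hFQ (F.equivFin.symm i).2
  have hQne : Q ≠ ∅ := by
    intro hE
    exact absurd (hqmem ⟨0, hkpos⟩) (by simp [hE])
  -- istar bound
  have hsup : istar q ≤ k - 1 := by
    apply csSup_le'
    rintro x ⟨G, hG, r, hr⟩
    by_contra hx
    push_neg at hx
    have hGcard : k ≤ G.card := by
      have := G.card_le_univ
      simp [Fintype.card_fin] at this
      omega
    have hGuniv : G = Finset.univ := Finset.eq_univ_of_card G (le_antisymm (by simpa using G.card_le_univ) (by simpa using hGcard))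
    obtain ⟨p, hpF, hpr⟩ := hno r
    have : r ≤ q (F.equivFin ⟨p, hpF⟩) := hr _ (by simp [hGuniv])
    simp only [hq, Equiv.symm_apply_apply] at this
    exact hpr this
  have hInt : intNum Q ≤ (istar q : ℝ) / (k : ℝ) := by
    rw [intNum, if_neg hQne]
    apply csInf_le
    · refine ⟨0, ?_⟩
      rintro x ⟨n, hn, q', _, rfl⟩
      positivity
    · exact ⟨k, hkpos, q, hqmem, rfl⟩
  -- arithmetic
  have hkm : (k : ℝ) ≤ (m : ℝ) := by exact_mod_cast hFm
  have hk2 : (2 : ℝ) ≤ (k : ℝ) := by exact_mod_cast h2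
  have hcast : (istar q : ℝ) ≤ (k : ℝ) - 1 := by
    have : ((istar q : ℕ) : ℝ) ≤ ((k - 1 : ℕ) : ℝ) := by exact_mod_cast hsup
    rw [Nat.cast_sub (by omega)] at this
    simpa using this
  have hkpos' : (0 : ℝ) < (k : ℝ) := by positivity
  have hdiv : (istar q : ℝ) / (k : ℝ) ≤ 1 - 1 / (k : ℝ) := by
    rw [div_le_iff₀ hkpos']
    have : (0 : ℝ) < k := hkpos'
    field_simp
    linarith
  have h1 : 1 / ((m : ℝ) + 1) < 1 / (k : ℝ) := by
    apply one_div_lt_one_div_of_lt (by linarith) (by linarith)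
  linarith
end

section
/- Let B be a Boolean algebra and Ξ : B → [0,1] a finitely additive probability measure. Fix δ ∈ [0,1] and let Q := { b ∈ B \ {0} : Ξ(b) ≥ δ }. Then in the forcing notion P := B \ {0} (ordered by the Boolean order), the intersection number satisfies int(Q) ≥ δ; concretely, for every n ≥ 1 and every q̄ ∈ Qⁿ, there is a set F of indices with |F| ≥ δ·n such that the meet of {q_i : i ∈ F} is nonzero. -/
/-- Kelley's lemma (concrete form): if `Ξ` is a finitely additive probability
measure on a Boolean algebra `B`, `δ ∈ [0,1]`, and `q : Fin n → B` (`n ≥ 1`)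
consists of nonzero elements of measure `≥ δ`, then there is a set `F` of
indices of size `≥ δ·n` such that `⋀_{i ∈ F} q i ≠ ⊥`.  This is precisely
`int(Q) ≥ δ` for `Q = { b ≠ ⊥ : Ξ(b) ≥ δ }` in the forcing notion `B \ {⊥}`. -/
theorem stmt4 {B : Type*} [BooleanAlgebra B] (Ξ : B → ℝ)
    (hzero : Ξ ⊥ = 0) (hone : Ξ ⊤ = 1) (hnonneg : ∀ a, 0 ≤ Ξ a)
    (hadd : ∀ a b : B, a ⊓ b = ⊥ → Ξ (a ⊔ b) = Ξ a + Ξ b)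
    (δ : ℝ) (hδ0 : 0 ≤ δ) (hδ1 : δ ≤ 1)
    (n : ℕ) (hn : 0 < n) (q : Fin n → B)
    (hq : ∀ i, q i ≠ ⊥ ∧ δ ≤ Ξ (q i)) :
    ∃ F : Finset (Fin n), δ * (n : ℝ) ≤ (F.card : ℝ) ∧ F.inf q ≠ ⊥ := by
  classical
  have hmono : ∀ a b : B, a ≤ b → Ξ a ≤ Ξ b := by
    intro a b hab
    have h1 : a ⊓ b \ a = ⊥ := by simp
    have h2 : a ⊔ b \ a = b := le_antisymm (sup_le hab sdiff_le) le_sup_sdiff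
    have := hadd a (b \ a) h1
    rw [h2] at this
    nlinarith [hnonneg (b \ a)]
  have hsplit : ∀ b c : B, Ξ b = Ξ (b ⊓ c) + Ξ (b ⊓ cᶜ) := by
    intro b c
    have hd : (b ⊓ c) ⊓ (b ⊓ cᶜ) = ⊥ := by
      rw [inf_inf_inf_comm]; simp
    have hs : (b ⊓ c) ⊔ (b ⊓ cᶜ) = b := by
      rw [← inf_sup_left]; simp
    calc Ξ b = Ξ ((b ⊓ c) ⊔ (b ⊓ cᶜ)) := by rw [hs]
    _ = _ := hadd _ _ hd
  -- key decomposition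
  have key : ∀ t : Finset (Fin n), ∀ b : B,
      Ξ b = ∑ S ∈ t.powerset, Ξ (b ⊓ (S.inf q ⊓ (t \ S).inf (fun i => (q i)ᶜ))) := by
    intro t
    induction t using Finset.induction_on with
    | empty => intro b; simp
    | @insert a t ha ih =>
      intro b
      rw [Finset.sum_powerset_insert ha]
      have hterm : ∀ S ∈ t.powerset,
          Ξ (b ⊓ (S.inf q ⊓ (t \ S).inf (fun i => (q i)ᶜ)))
          = Ξ (b ⊓ (S.inf q ⊓ ((insert a t) \ S).inf (fun i => (q i)ᶜ)))
            + Ξ (b ⊓ ((insert a S).inf q ⊓ ((insert a t) \ insert a S).inf (fun i => (q i)ᶜ))) := by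
        intro S hS
        rw [Finset.mem_powerset] at hS
        have haS : a ∉ S := fun h => ha (hS h)
        have e1 : (insert a t) \ S = insert a (t \ S) := by
          ext x; simp only [Finset.mem_sdiff, Finset.mem_insert]
          constructor
          · rintro ⟨h1 | h1, h2⟩ <;> tauto
          · rintro (rfl | ⟨h1, h2⟩) <;> tauto
        have e2 : (insert a t) \ insert a S = t \ S := by
          ext x; simp only [Finset.mem_sdiff, Finset.mem_insert]
          constructor
          · rintro ⟨h1 | h1, h2⟩
            · exact absurd (Or.inl h1) h2
            · constructor
              · exact h1
              · intro hx; exact h2 (Or.inr hx)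
          · rintro ⟨h1, h2⟩
            refine ⟨Or.inr h1, ?_⟩
            rintro (rfl | hx)
            · exact ha h1
            · exact h2 hx
        rw [e1, e2, Finset.inf_insert, Finset.inf_insert]
        rw [hsplit (b ⊓ (S.inf q ⊓ (t \ S).inf (fun i => (q i)ᶜ))) (q a), add_comm]
        congr 1
        · congr 1
          ac_rfl
        · congr 1
          ac_rfl
      rw [ih b, Finset.sum_congr rfl hterm, Finset.sum_add_distrib]
  set P : Finset (Finset (Fin n)) := (Finset.univ : Finset (Fin n)).powerset with hP
  obtain ⟨A, hA⟩ : ∃ A : Finset (Fin n) → B, ∀ S,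
      A S = S.inf q ⊓ ((Finset.univ : Finset (Fin n)) \ S).inf (fun i => (q i)ᶜ) :=
    ⟨_, fun S => rfl⟩
  have keyU : ∀ b : B, Ξ b = ∑ S ∈ P, Ξ (b ⊓ A S) := by
    intro b
    simp only [hA]
    exact key Finset.univ b
  have htot : ∑ S ∈ P, Ξ (A S) = 1 := by
    have h := keyU ⊤
    simp only [top_inf_eq] at h
    rw [← h, hone]
  have hqi : ∀ i : Fin n,
      Ξ (q i) ≤ ∑ S ∈ P, (if i ∈ S then Ξ (A S) else 0) := by
    intro i
    rw [keyU (q i)]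
    apply Finset.sum_le_sum
    intro S hS
    by_cases hi : i ∈ S
    · simp only [hi, if_true]
      exact hmono _ _ inf_le_right
    · simp only [hi, if_false]
      have h1 : A S ≤ (q i)ᶜ := by
        rw [hA]
        refine le_trans inf_le_right (Finset.inf_le ?_)
        simp [hi]
      have hle : q i ⊓ A S ≤ ⊥ := by
        calc q i ⊓ A S ≤ q i ⊓ (q i)ᶜ := inf_le_inf_left _ h1
        _ = ⊥ := inf_compl_eq_bot
      have hb : q i ⊓ A S = ⊥ := le_bot_iff.mp hle
      rw [hb, hzero]
  have hsum : δ * (n : ℝ) ≤ ∑ S ∈ P, (S.card : ℝ) * Ξ (A S) := by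
    calc δ * (n : ℝ) = ∑ _i : Fin n, δ := by simp [mul_comm]
    _ ≤ ∑ i : Fin n, Ξ (q i) := Finset.sum_le_sum fun i _ => (hq i).2
    _ ≤ ∑ i : Fin n, ∑ S ∈ P, (if i ∈ S then Ξ (A S) else 0) :=
        Finset.sum_le_sum fun i _ => hqi i
    _ = ∑ S ∈ P, ∑ i : Fin n, (if i ∈ S then Ξ (A S) else 0) := Finset.sum_comm
    _ = ∑ S ∈ P, (S.card : ℝ) * Ξ (A S) := by
        refine Finset.sum_congr rfl fun S _ => ?_
        rw [Finset.sum_ite_mem, Finset.univ_inter, Finset.sum_const, nsmul_eq_mul]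
  have hPos : ∃ S ∈ P, 0 < Ξ (A S) := by
    by_contra h
    push_neg at h
    have h0 : ∑ S ∈ P, Ξ (A S) = 0 :=
      Finset.sum_eq_zero fun S hS => le_antisymm (h S hS) (hnonneg _)
    rw [htot] at h0
    norm_num at h0
  obtain ⟨S₁, hS₁, hS₁pos⟩ := hPos
  have hne : (P.filter (fun S => 0 < Ξ (A S))).Nonempty :=
    ⟨S₁, Finset.mem_filter.mpr ⟨hS₁, hS₁pos⟩⟩
  obtain ⟨S₀, hS₀mem, hS₀max⟩ :=
    Finset.exists_max_image (P.filter (fun S => 0 < Ξ (A S))) (fun S => S.card) hne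
  obtain ⟨hS₀P, hS₀pos⟩ := Finset.mem_filter.mp hS₀mem
  have hbound : ∑ S ∈ P, (S.card : ℝ) * Ξ (A S) ≤ (S₀.card : ℝ) := by
    calc ∑ S ∈ P, (S.card : ℝ) * Ξ (A S)
        ≤ ∑ S ∈ P, (S₀.card : ℝ) * Ξ (A S) := by
          refine Finset.sum_le_sum fun S hS => ?_
          rcases lt_or_eq_of_le (hnonneg (A S)) with hpos | hzeroS
          · have : S.card ≤ S₀.card :=
              hS₀max S (Finset.mem_filter.mpr ⟨hS, hpos⟩)
            exact mul_le_mul_of_nonneg_right (by exact_mod_cast this) (hnonneg _)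
          · rw [← hzeroS, mul_zero, mul_zero]
    _ = (S₀.card : ℝ) * ∑ S ∈ P, Ξ (A S) := by rw [Finset.mul_sum]
    _ = (S₀.card : ℝ) := by rw [htot, mul_one]
  refine ⟨S₀, le_trans hsum hbound, ?_⟩
  intro hbot
  have h1 : A S₀ ≤ ⊥ := by
    rw [hA]
    exact le_trans inf_le_left (le_of_eq hbot)
  have h2 : Ξ (A S₀) = 0 := by rw [le_bot_iff.mp h1, hzero]
  rw [h2] at hS₀pos
  exact lt_irrefl 0 hS₀pos
end

section
/- (Compatibility theorem for finitely additive measures.) Let B be a Boolean algebra and for d ∈ {0,1} let B_d be a Boolean subalgebra of B equipped with a finite finitely additive measure Ξ_d : B_d → [0,∞). The following are equivalent: (a) there is a finitely additive measure Ξ on the subalgebra generated by B_0 ∪ B_1 extending both Ξ_0 and Ξ_1; (b) Ξ_0(1) = Ξ_1(1) and for all a ∈ B_0, a' ∈ B_1, if a ≤ a' then Ξ_0(a) ≤ Ξ_1(a'); (c) for all d, d' ∈ {0,1}, a ∈ B_d, a' ∈ B_{d'}, if a ≤ a' then Ξ_d(a) ≤ Ξ_{d'}(a'). -/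
/-- `C` is a Boolean subalgebra of `B` (as a set closed under the operations). -/
def IsSubalg {B : Type*} [BooleanAlgebra B] (C : Set B) : Prop :=
  ⊥ ∈ C ∧ ⊤ ∈ C ∧ (∀ a ∈ C, ∀ b ∈ C, a ⊔ b ∈ C) ∧ (∀ a ∈ C, aᶜ ∈ C)

/-- `Ξ` is a (finite, real-valued) finitely additive measure on the subalgebra `C`. -/
def IsFAMOn {B : Type*} [BooleanAlgebra B] (Ξ : B → ℝ) (C : Set B) : Prop :=
  Ξ ⊥ = 0 ∧ (∀ a ∈ C, 0 ≤ Ξ a) ∧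
    ∀ a ∈ C, ∀ b ∈ C, a ⊓ b = ⊥ → Ξ (a ⊔ b) = Ξ a + Ξ b

/-- The Boolean subalgebra generated by `S`. -/
def subalgClosure {B : Type*} [BooleanAlgebra B] (S : Set B) : Set B :=
  ⋂₀ {C : Set B | IsSubalg C ∧ S ⊆ C}

/-!
For `(b) ⇒ (a)`, view each `a : B` as its indicator function `χ a` on the Stone space of `B`
(its prime ideals). Condition (b) yields: if `∑ α_a χ a + ∑ β_b χ b ≥ 0` with `a ∈ S₀`,
`b ∈ S₁`, then `∑ α_a Ξ₀ a + ∑ β_b Ξ₁ b ≥ 0`. After refining the finitely many `a` and `b` into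
partitions `P ⊆ S₀` and `Q ⊆ S₁` of `⊤`, this becomes `∑ γ p Ξ₀ p ≤ ∑ δ q Ξ₁ q` whenever
`γ p ≤ δ q` for all `p ⊓ q ≠ ⊥`. That follows by induction on the number of values: lowering the
largest value `a` to the next one `t` changes the two sides by `(a - t) Ξ₀ U` and `(a - t) Ξ₁ V`,
where the top level sets satisfy `U ≤ V`, so (b) applies; with a single value `a` left, both
sides equal `a Ξ₀ ⊤ = a Ξ₁ ⊤`. By M. Riesz's extension theorem, the positive functional so
defined on combinations supported on `S₀` and `S₁` extends positively to all finite combinations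
of elements of `B`, and its values at single elements form a fam on all of `B` extending `Ξ₀`
and `Ξ₁`.

`(a) ⇒ (b)` is monotonicity of `Ξ`. In `(b) ⇔ (c)`, the only new case `d = 1, d' = 0` is (b)
applied to complements.
-/

section

open Finset

open scoped Classical

variable {B : Type*} [BooleanAlgebra B] {C : Set B}

theorem IsSubalg.bot_mem (hC : IsSubalg C) : ⊥ ∈ C := hC.1

theorem IsSubalg.top_mem (hC : IsSubalg C) : ⊤ ∈ C := hC.2.1

theorem IsSubalg.sup_mem (hC : IsSubalg C) {a b : B} (ha : a ∈ C) (hb : b ∈ C) : a ⊔ b ∈ C :=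
  hC.2.2.1 a ha b hb

theorem IsSubalg.compl_mem (hC : IsSubalg C) {a : B} (ha : a ∈ C) : aᶜ ∈ C := hC.2.2.2 a ha

theorem IsSubalg.inf_mem (hC : IsSubalg C) {a b : B} (ha : a ∈ C) (hb : b ∈ C) : a ⊓ b ∈ C := by
  simpa using hC.compl_mem (hC.sup_mem (hC.compl_mem ha) (hC.compl_mem hb))

theorem IsSubalg.finset_sup_mem (hC : IsSubalg C) {ι : Type*} {s : Finset ι} {f : ι → B}
    (hf : ∀ i ∈ s, f i ∈ C) : s.sup f ∈ C :=
  Finset.sup_induction hC.bot_mem (fun _ ha _ hb => hC.sup_mem ha hb) hf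

theorem isSubalg_univ : IsSubalg (Set.univ : Set B) :=
  ⟨trivial, trivial, fun _ _ _ _ => trivial, fun _ _ => trivial⟩

theorem subalgClosure_isSubalg (S : Set B) : IsSubalg (subalgClosure S) :=
  ⟨fun _ hC => hC.1.bot_mem, fun _ hC => hC.1.top_mem,
    fun _ ha _ hb C hC => hC.1.sup_mem (ha C hC) (hb C hC),
    fun _ ha C hC => hC.1.compl_mem (ha C hC)⟩

theorem subset_subalgClosure (S : Set B) : S ⊆ subalgClosure S :=
  fun _ hx _ hC => hC.2 hx

def IsAdditiveOn {M : Type*} [AddCommMonoid M] (μ : B → M) (C : Set B) : Prop :=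
  μ ⊥ = 0 ∧ ∀ a ∈ C, ∀ b ∈ C, a ⊓ b = ⊥ → μ (a ⊔ b) = μ a + μ b

theorem IsFAMOn.isAdditiveOn {Ξ : B → ℝ} (hΞ : IsFAMOn Ξ C) : IsAdditiveOn Ξ C :=
  ⟨hΞ.1, hΞ.2.2⟩

theorem IsFAMOn.mono {Ξ : B → ℝ} {D : Set B} (hΞ : IsFAMOn Ξ C) (hDC : D ⊆ C) : IsFAMOn Ξ D :=
  ⟨hΞ.1, fun a ha => hΞ.2.1 a (hDC ha), fun a ha b hb => hΞ.2.2 a (hDC ha) b (hDC hb)⟩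

theorem IsFAMOn.monotoneOn {Ξ : B → ℝ} (hΞ : IsFAMOn Ξ C) (hC : IsSubalg C) :
    MonotoneOn Ξ C := by
  intro a ha b hb hab
  have hba : b ⊓ aᶜ ∈ C := hC.inf_mem hb (hC.compl_mem ha)
  have hsplit : Ξ b = Ξ a + Ξ (b ⊓ aᶜ) := by
    rw [← hΞ.2.2 a ha _ hba (by rw [inf_left_comm, inf_compl_self, inf_bot_eq]),
      sup_inf_left, sup_compl_eq_top, inf_top_eq, sup_eq_right.2 hab]
  linarith [hΞ.2.1 _ hba]

theorem IsAdditiveOn.add_compl {M : Type*} [AddCommMonoid M] {μ : B → M}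
    (hμ : IsAdditiveOn μ C) (hC : IsSubalg C) {a : B} (ha : a ∈ C) : μ a + μ aᶜ = μ ⊤ := by
  rw [← hμ.2 a ha aᶜ (hC.compl_mem ha) inf_compl_eq_bot, sup_compl_eq_top]

theorem IsAdditiveOn.map_finset_sup {M : Type*} [AddCommMonoid M] {μ : B → M}
    (hμ : IsAdditiveOn μ C) (hC : IsSubalg C) {s : Finset B} (hs : ↑s ⊆ C)
    (hd : (s : Set B).PairwiseDisjoint id) : μ (s.sup id) = ∑ p ∈ s, μ p := by
  induction s using Finset.induction_on with
  | empty => simpa using hμ.1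
  | insert a s ha ih =>
    rw [coe_insert, Set.insert_subset_iff] at hs
    rw [coe_insert, Set.pairwiseDisjoint_insert_of_notMem (by exact_mod_cast ha)] at hd
    have hdisj : a ⊓ s.sup id = ⊥ :=
      disjoint_iff.1 (Finset.disjoint_sup_right.2 fun b hb => hd.2 b hb)
    rw [sup_insert, sum_insert ha, ← ih hs.2 hd.1]
    exact hμ.2 a hs.1 _ (hC.finset_sup_mem fun b hb => hs.2 hb) hdisj

noncomputable def Finpartition.ofCompl (a : B) : Finpartition (⊤ : B) :=
  .ofErase {a, aᶜ}
    (supIndep_iff_pairwiseDisjoint.2 <| by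
      rw [coe_pair]
      exact Set.pairwise_pair.2 fun _ => ⟨disjoint_compl_right, disjoint_compl_left⟩)
    (by simp)

theorem Finpartition.eq_or_eq_compl_of_mem_ofCompl {a p : B} (hp : p ∈ (ofCompl a).parts) :
    p = a ∨ p = aᶜ := by
  simpa [ofCompl] using (Finset.mem_erase.1 hp).2

theorem exists_finpartition_refining (hC : IsSubalg C) (s : Finset B) (hs : ↑s ⊆ C) :
    ∃ P : Finpartition (⊤ : B), ↑P.parts ⊆ C ∧ ∀ a ∈ s, ∀ p ∈ P.parts, p ≤ a ∨ p ≤ aᶜ := by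
  induction s using Finset.induction_on with
  | empty =>
    refine ⟨⊤, fun p hp => ?_, by simp⟩
    rw [mem_singleton.1 (Finpartition.parts_top_subset _ hp)]
    exact hC.top_mem
  | insert a s _ ih =>
    rw [coe_insert, Set.insert_subset_iff] at hs
    obtain ⟨P, hPC, hPs⟩ := ih hs.2
    refine ⟨P ⊓ .ofCompl a, fun p hp => ?_, fun b hb p hp => ?_⟩
    · obtain ⟨⟨q, r⟩, hqr, rfl⟩ := mem_image.1 (mem_of_mem_erase hp)
      rw [mem_product] at hqr
      refine hC.inf_mem (hPC hqr.1) ?_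
      rcases Finpartition.eq_or_eq_compl_of_mem_ofCompl hqr.2 with rfl | rfl
      exacts [hs.1, hC.compl_mem hs.1]
    · obtain ⟨q, hq, hpq⟩ := inf_le_left (a := P) hp
      obtain ⟨r, hr, hpr⟩ := inf_le_right (a := P) hp
      rcases mem_insert.1 hb with rfl | hb
      · rcases Finpartition.eq_or_eq_compl_of_mem_ofCompl hr with rfl | rfl
        exacts [.inl hpr, .inr hpr]
      · exact (hPs b hb q hq).imp hpq.trans hpq.trans

theorem Finpartition.sup_filter_le_eq (P : Finpartition (⊤ : B)) {a : B}
    (h : ∀ p ∈ P.parts, p ≤ a ∨ p ≤ aᶜ) : (P.parts.filter (· ≤ a)).sup id = a := by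
  refine le_antisymm (Finset.sup_le fun p hp => (mem_filter.1 hp).2) ?_
  calc a = a ⊓ P.parts.sup id := by rw [P.sup_parts, inf_top_eq]
    _ = P.parts.sup fun p => a ⊓ p := Finset.sup_inf_distrib_left _ _ _
    _ ≤ _ := Finset.sup_le fun p hp => by
      rcases h p hp with hpa | hpa
      · exact inf_le_right.trans (le_sup (f := id) (mem_filter.2 ⟨hp, hpa⟩))
      · rw [(le_compl_iff_disjoint_right.1 hpa).symm.eq_bot]
        exact bot_le

theorem IsAdditiveOn.eq_sum_parts {M : Type*} [AddCommMonoid M] {μ : B → M}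
    (hμ : IsAdditiveOn μ C) (hC : IsSubalg C) {P : Finpartition (⊤ : B)} (hP : ↑P.parts ⊆ C) :
    μ ⊤ = ∑ p ∈ P.parts, μ p := by
  rw [← hμ.map_finset_sup hC hP P.disjoint, P.sup_parts]

theorem IsAdditiveOn.eq_sum_parts_le {M : Type*} [AddCommMonoid M] {μ : B → M}
    (hμ : IsAdditiveOn μ C) (hC : IsSubalg C) {P : Finpartition (⊤ : B)} (hP : ↑P.parts ⊆ C)
    {a : B} (h : ∀ p ∈ P.parts, p ≤ a ∨ p ≤ aᶜ) : μ a = ∑ p ∈ P.parts with p ≤ a, μ p := by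
  have hsub : ↑(P.parts.filter (· ≤ a)) ⊆ (P.parts : Set B) := coe_subset.2 (filter_subset _ _)
  conv_lhs => rw [← P.sup_filter_le_eq h]
  exact hμ.map_finset_sup hC (hsub.trans hP) (P.disjoint.subset hsub)

/-- The value of the simple function `∑ a, α a • 1_a` on an atom `p` of a partition refining the
support of `α`. -/
noncomputable def Finsupp.valueOn (α : B →₀ ℝ) (p : B) : ℝ := ∑ a ∈ α.support with p ≤ a, α a

theorem IsAdditiveOn.linearCombination_eq {M : Type*} [AddCommMonoid M] [Module ℝ M]
    {μ : B → M} (hμ : IsAdditiveOn μ C) (hC : IsSubalg C) {P : Finpartition (⊤ : B)}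
    (hP : ↑P.parts ⊆ C) {α : B →₀ ℝ} (h : ∀ a ∈ α.support, ∀ p ∈ P.parts, p ≤ a ∨ p ≤ aᶜ) :
    Finsupp.linearCombination ℝ μ α = ∑ p ∈ P.parts, α.valueOn p • μ p := by
  simp_rw [Finsupp.linearCombination_apply, Finsupp.sum, Finsupp.valueOn, sum_smul, sum_filter]
  rw [sum_comm]
  refine sum_congr rfl fun a ha => ?_
  rw [hμ.eq_sum_parts_le hC hP (h a ha), smul_sum, sum_filter]

theorem IsAdditiveOn.sum_mul_eq_sum_min_mul_add {μ : B → ℝ} (hμ : IsAdditiveOn μ C)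
    (hC : IsSubalg C) {P : Finpartition (⊤ : B)} (hP : ↑P.parts ⊆ C) (γ : B → ℝ) {a t : ℝ}
    (hta : t ≤ a) (hγ : ∀ p ∈ P.parts, γ p ≤ t ∨ γ p = a) :
    ∑ p ∈ P.parts, γ p * μ p =
      ∑ p ∈ P.parts, min (γ p) t * μ p + (a - t) * μ ((P.parts.filter (γ · = a)).sup id) := by
  have hsub : ↑(P.parts.filter (γ · = a)) ⊆ (P.parts : Set B) := coe_subset.2 (filter_subset _ _)
  rw [hμ.map_finset_sup hC (hsub.trans hP) (P.disjoint.subset hsub), mul_sum, sum_filter,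
    ← sum_add_distrib]
  refine sum_congr rfl fun p hp => ?_
  by_cases h : γ p = a
  · rw [if_pos h, h, min_eq_right hta]
    ring
  · rw [min_eq_left ((hγ p hp).resolve_right h), if_neg h, add_zero]

theorem Finpartition.sup_filter_eq_le_sup_filter_eq {P Q : Finpartition (⊤ : B)} {γ δ : B → ℝ}
    {a : ℝ} (hδ : ∀ q ∈ Q.parts, δ q ≤ a)
    (hγδ : ∀ p ∈ P.parts, ∀ q ∈ Q.parts, p ⊓ q ≠ ⊥ → γ p ≤ δ q) :
    (P.parts.filter (γ · = a)).sup id ≤ (Q.parts.filter (δ · = a)).sup id := by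
  refine Finset.sup_le fun p hp => ?_
  rw [mem_filter] at hp
  calc id p = p ⊓ Q.parts.sup id := by rw [Q.sup_parts, inf_top_eq, id]
    _ = Q.parts.sup fun q => p ⊓ q := Finset.sup_inf_distrib_left _ _ _
    _ ≤ _ := Finset.sup_le fun q hq => by
      by_cases hpq : p ⊓ q = ⊥
      · rw [hpq]; exact bot_le
      have hδq : δ q = a := le_antisymm (hδ q hq) (hp.2 ▸ hγδ p hp.1 q hq hpq)
      exact inf_le_right.trans (le_sup (f := id) (mem_filter.2 ⟨hq, hδq⟩))

abbrev StonePt (B : Type*) [BooleanAlgebra B] : Type _ := {J : Order.Ideal B // J.IsPrime}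

noncomputable def stoneInd (a : B) (J : StonePt B) : ℝ := if a ∈ J.1 then 0 else 1

theorem stoneInd_nonneg (a : B) (J : StonePt B) : 0 ≤ stoneInd a J := by
  unfold stoneInd; split_ifs <;> norm_num

theorem abs_stoneInd_le_one (a : B) (J : StonePt B) : |stoneInd a J| ≤ 1 := by
  unfold stoneInd; split_ifs <;> norm_num

theorem stoneInd_top : stoneInd (⊤ : B) = 1 :=
  funext fun J => if_neg J.2.toIsProper.top_notMem

theorem isAdditiveOn_stoneInd : IsAdditiveOn (stoneInd (B := B)) Set.univ := by
  refine ⟨funext fun J => if_pos J.1.bot_mem, fun a _ b _ hab => funext fun J => ?_⟩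
  have hsup : a ⊔ b ∈ J.1 ↔ a ∈ J.1 ∧ b ∈ J.1 :=
    ⟨fun h => ⟨J.1.lower le_sup_left h, J.1.lower le_sup_right h⟩, fun h => J.1.sup_mem h.1 h.2⟩
  have hbot : a ∈ J.1 ∨ b ∈ J.1 := J.2.mem_or_mem (hab ▸ J.1.bot_mem)
  simp only [stoneInd, Pi.add_apply, hsup]
  by_cases ha : a ∈ J.1 <;> by_cases hb : b ∈ J.1 <;> simp_all

theorem exists_stonePt_notMem {a : B} (ha : a ≠ ⊥) : ∃ J : StonePt B, a ∉ J.1 := by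
  have hdisj : Disjoint (Order.PFilter.principal a : Set B) (Order.Ideal.principal (⊥ : B)) :=
    Set.disjoint_left.2 fun b hab hb => ha (le_bot_iff.1
      ((Order.PFilter.mem_principal.1 hab).trans (Order.Ideal.mem_principal.1 hb)))
  obtain ⟨J, hJ, -, hdis⟩ := DistribLattice.prime_ideal_of_disjoint_filter_ideal hdisj
  exact ⟨⟨J, hJ⟩, Set.disjoint_left.1 hdis (Order.PFilter.mem_principal.2 le_rfl)⟩

theorem Finpartition.sum_smul_stoneInd_apply (P : Finpartition (⊤ : B)) (γ : B → ℝ) {p : B}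
    (hp : p ∈ P.parts) {J : StonePt B} (hJ : p ∉ J.1) :
    (∑ q ∈ P.parts, γ q • stoneInd q) J = γ p := by
  rw [Finset.sum_apply, sum_eq_single_of_mem p hp]
  · simp [stoneInd, hJ]
  · intro q hq hqp
    have hqJ : q ∈ J.1 :=
      (J.2.mem_or_mem ((P.disjoint hq hp hqp).eq_bot ▸ J.1.bot_mem)).resolve_right hJ
    simp [stoneInd, hqJ]

theorem neg_sum_abs_le_linearCombination_stoneInd (α : B →₀ ℝ) (J : StonePt B) :
    -(α.sum fun _ c => |c|) ≤ Finsupp.linearCombination ℝ stoneInd α J := by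
  rw [Finsupp.linearCombination_apply, Finsupp.sum, Finsupp.sum, Finset.sum_apply,
    ← sum_neg_distrib]
  refine sum_le_sum fun a _ => ?_
  calc -|α a| ≤ -|α a * stoneInd a J| := by
        rw [abs_mul, neg_le_neg_iff]
        exact mul_le_of_le_one_right (abs_nonneg _) (abs_stoneInd_le_one a J)
    _ ≤ _ := neg_abs_le _

theorem LinearMap.eq_of_map_eq_of_nonneg {E F : Type*} [AddCommGroup E] [Module ℝ E]
    [AddCommGroup F] [PartialOrder F] [IsOrderedAddMonoid F] [Module ℝ F] (g : E →ₗ[ℝ] ℝ)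
    (T : E →ₗ[ℝ] F) (hg : ∀ z, 0 ≤ T z → 0 ≤ g z) {z z' : E} (h : T z = T z') : g z = g z' := by
  have h₁ := hg (z' - z) (by rw [map_sub, h, sub_self])
  have h₂ := hg (z - z') (by rw [map_sub, h, sub_self])
  rw [map_sub, sub_nonneg] at h₁ h₂
  exact le_antisymm h₁ h₂

def IsCompatible (S₀ S₁ : Set B) (Ξ₀ Ξ₁ : B → ℝ) : Prop :=
  Ξ₀ ⊤ = Ξ₁ ⊤ ∧ ∀ a ∈ S₀, ∀ a' ∈ S₁, a ≤ a' → Ξ₀ a ≤ Ξ₁ a'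

variable {S₀ S₁ : Set B} {Ξ₀ Ξ₁ : B → ℝ}

theorem IsCompatible.le_of_le_swap (hc : IsCompatible S₀ S₁ Ξ₀ Ξ₁) (hS₀ : IsSubalg S₀)
    (hS₁ : IsSubalg S₁) (hΞ₀ : IsAdditiveOn Ξ₀ S₀) (hΞ₁ : IsAdditiveOn Ξ₁ S₁) {a a' : B}
    (ha : a ∈ S₁) (ha' : a' ∈ S₀) (h : a ≤ a') : Ξ₁ a ≤ Ξ₀ a' := by
  have := hc.2 _ (hS₀.compl_mem ha') _ (hS₁.compl_mem ha) (compl_le_compl h)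
  linarith [hΞ₀.add_compl hS₀ ha', hΞ₁.add_compl hS₁ ha, hc.1]

theorem IsCompatible.sum_parts_mul_le (hc : IsCompatible S₀ S₁ Ξ₀ Ξ₁) (hS₀ : IsSubalg S₀)
    (hS₁ : IsSubalg S₁) (hΞ₀ : IsAdditiveOn Ξ₀ S₀) (hΞ₁ : IsAdditiveOn Ξ₁ S₁)
    {P Q : Finpartition (⊤ : B)} (hP : ↑P.parts ⊆ S₀) (hQ : ↑Q.parts ⊆ S₁) {γ δ : B → ℝ}
    (hγδ : ∀ p ∈ P.parts, ∀ q ∈ Q.parts, p ⊓ q ≠ ⊥ → γ p ≤ δ q) :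
    ∑ p ∈ P.parts, γ p * Ξ₀ p ≤ ∑ q ∈ Q.parts, δ q * Ξ₁ q := by
  suffices key : ∀ F : Finset ℝ, ∀ γ δ : B → ℝ, (∀ p ∈ P.parts, γ p ∈ F) →
      (∀ q ∈ Q.parts, δ q ∈ F) → (∀ p ∈ P.parts, ∀ q ∈ Q.parts, p ⊓ q ≠ ⊥ → γ p ≤ δ q) →
      ∑ p ∈ P.parts, γ p * Ξ₀ p ≤ ∑ q ∈ Q.parts, δ q * Ξ₁ q from
    key (P.parts.image γ ∪ Q.parts.image δ) γ δ
      (fun p hp => mem_union_left _ (mem_image_of_mem γ hp))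
      (fun q hq => mem_union_right _ (mem_image_of_mem δ hq)) hγδ
  intro F
  induction F using Finset.induction_on_max with
  | empty =>
    intro γ δ hγ hδ _
    rw [eq_empty_of_forall_notMem fun p hp => notMem_empty _ (hγ p hp),
      eq_empty_of_forall_notMem fun q hq => notMem_empty _ (hδ q hq), sum_empty, sum_empty]
  | insert a s hs ih =>
    intro γ δ hγ hδ hγδ
    rcases s.eq_empty_or_nonempty with rfl | hne
    · simp only [insert_empty, mem_singleton] at hγ hδ
      rw [sum_congr rfl fun p hp => congrArg (· * Ξ₀ p) (hγ p hp),
        sum_congr rfl fun q hq => congrArg (· * Ξ₁ q) (hδ q hq), ← mul_sum, ← mul_sum,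
        ← hΞ₀.eq_sum_parts hS₀ hP, ← hΞ₁.eq_sum_parts hS₁ hQ, hc.1]
    set t := s.max' hne
    have hta : t < a := hs t (s.max'_mem hne)
    have hval : ∀ x ∈ insert a s, x ≤ t ∨ x = a := fun x hx =>
      (mem_insert.1 hx).elim .inr fun hx => .inl (s.le_max' x hx)
    have hmin : ∀ x ∈ insert a s, min x t ∈ s := fun x hx => by
      rcases mem_insert.1 hx with rfl | hx
      · rw [min_eq_right hta.le]; exact s.max'_mem hne
      · rw [min_eq_left (s.le_max' x hx)]; exact hx
    have hlevel := Finpartition.sup_filter_eq_le_sup_filter_eq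
      (fun q hq => (hval _ (hδ q hq)).elim (·.trans hta.le) le_of_eq) hγδ
    rw [hΞ₀.sum_mul_eq_sum_min_mul_add hS₀ hP γ hta.le fun p hp => hval _ (hγ p hp),
      hΞ₁.sum_mul_eq_sum_min_mul_add hS₁ hQ δ hta.le fun q hq => hval _ (hδ q hq)]
    refine add_le_add (ih _ _ (fun p hp => hmin _ (hγ p hp)) (fun q hq => hmin _ (hδ q hq))
      fun p hp q hq h => min_le_min_right t (hγδ p hp q hq h)) ?_
    refine mul_le_mul_of_nonneg_left (hc.2 _ (hS₀.finset_sup_mem fun p hp => ?_) _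
      (hS₁.finset_sup_mem fun q hq => ?_) hlevel) (sub_nonneg.2 hta.le)
    exacts [hP (mem_filter.1 hp).1, hQ (mem_filter.1 hq).1]

theorem IsCompatible.linearCombination_nonneg (hc : IsCompatible S₀ S₁ Ξ₀ Ξ₁)
    (hS₀ : IsSubalg S₀) (hS₁ : IsSubalg S₁) (hΞ₀ : IsAdditiveOn Ξ₀ S₀)
    (hΞ₁ : IsAdditiveOn Ξ₁ S₁) {α β : B →₀ ℝ} (hα : α ∈ Finsupp.supported ℝ ℝ S₀)
    (hβ : β ∈ Finsupp.supported ℝ ℝ S₁)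
    (h : 0 ≤ Finsupp.linearCombination ℝ stoneInd α + Finsupp.linearCombination ℝ stoneInd β) :
    0 ≤ Finsupp.linearCombination ℝ Ξ₀ α + Finsupp.linearCombination ℝ Ξ₁ β := by
  obtain ⟨P, hPS, hPα⟩ := exists_finpartition_refining hS₀ α.support hα
  obtain ⟨Q, hQS, hQβ⟩ := exists_finpartition_refining hS₁ β.support hβ
  rw [hΞ₀.linearCombination_eq hS₀ hPS hPα, hΞ₁.linearCombination_eq hS₁ hQS hQβ]
  rw [isAdditiveOn_stoneInd.linearCombination_eq isSubalg_univ (Set.subset_univ _) hPα,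
    isAdditiveOn_stoneInd.linearCombination_eq isSubalg_univ (Set.subset_univ _) hQβ] at h
  have hγδ : ∀ p ∈ P.parts, ∀ q ∈ Q.parts, p ⊓ q ≠ ⊥ → -α.valueOn p ≤ β.valueOn q := by
    intro p hp q hq hpq
    obtain ⟨J, hpqJ⟩ := exists_stonePt_notMem hpq
    have hJ := h J
    rw [Pi.zero_apply, Pi.add_apply, P.sum_smul_stoneInd_apply _ hp
      fun h => hpqJ (J.1.lower inf_le_left h),
      Q.sum_smul_stoneInd_apply _ hq fun h => hpqJ (J.1.lower inf_le_right h)] at hJ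
    linarith
  have := hc.sum_parts_mul_le hS₀ hS₁ hΞ₀ hΞ₁ hPS hQS hγδ
  simp only [smul_eq_mul, neg_mul, sum_neg_distrib] at this ⊢
  linarith

theorem IsCompatible.exists_isFAMOn_univ_extending (hc : IsCompatible S₀ S₁ Ξ₀ Ξ₁)
    (hS₀ : IsSubalg S₀) (hS₁ : IsSubalg S₁) (hΞ₀ : IsAdditiveOn Ξ₀ S₀)
    (hΞ₁ : IsAdditiveOn Ξ₁ S₁) :
    ∃ Ξ : B → ℝ, IsFAMOn Ξ Set.univ ∧ (∀ a ∈ S₀, Ξ a = Ξ₀ a) ∧ (∀ a ∈ S₁, Ξ a = Ξ₁ a) := by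
  -- `(α, β)` encodes `∑ α_a χ a + ∑ β_b χ b`, with `α` integrated against `Ξ₀`, `β` against `Ξ₁`.
  let χ := Finsupp.linearCombination ℝ (stoneInd (B := B))
  let T : (B →₀ ℝ) × (B →₀ ℝ) →ₗ[ℝ] StonePt B → ℝ := χ.coprod χ
  let D := (Finsupp.supported ℝ ℝ S₀).prod (Finsupp.supported ℝ ℝ S₁)
  let L := (Finsupp.linearCombination ℝ Ξ₀).coprod (Finsupp.linearCombination ℝ Ξ₁)
  have hD₀ : ∀ a ∈ S₀, (Finsupp.single a 1, 0) ∈ D := fun a ha =>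
    ⟨Finsupp.single_mem_supported ℝ 1 ha, zero_mem _⟩
  obtain ⟨g, hgL, hgT⟩ := riesz_extension ((PointedCone.positive ℝ _).comap T)
    ⟨D, L.domRestrict D⟩
    (fun z hz => hc.linearCombination_nonneg hS₀ hS₁ hΞ₀ hΞ₁ z.2.1 z.2.2 hz)
    (fun z => ⟨⟨((z.1.sum fun _ c => |c|) + z.2.sum fun _ c => |c|) • (Finsupp.single ⊤ 1, 0),
      D.smul_mem _ (hD₀ ⊤ hS₀.top_mem)⟩, fun J => by
        have hT : ∀ c : ℝ, T (c • (Finsupp.single ⊤ 1, 0) + z) J = c + χ z.1 J + χ z.2 J := by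
          simp [T, χ, stoneInd_top, add_assoc]
        show (0 : ℝ) ≤ T (_ + z) J
        rw [hT]
        linarith [neg_sum_abs_le_linearCombination_stoneInd z.1 J,
          neg_sum_abs_le_linearCombination_stoneInd z.2 J]⟩)
  have hg : ∀ z, 0 ≤ T z → 0 ≤ g z := fun z hz => hgT z hz
  have hgD : ∀ z ∈ D, g z = L z := fun z hz => hgL ⟨z, hz⟩
  refine ⟨fun c => g (Finsupp.single c 1, 0), ⟨?_, fun c _ => hg _ ?_, fun a _ b _ hab => ?_⟩,
    fun a ha => ?_, fun a ha => ?_⟩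
  · rw [← g.map_zero]
    exact g.eq_of_map_eq_of_nonneg T hg (by simp [T, χ, isAdditiveOn_stoneInd.1])
  · simp only [T, χ, LinearMap.coprod_apply, map_zero, add_zero,
      Finsupp.linearCombination_single, one_smul]
    exact fun J => stoneInd_nonneg c J
  · rw [← map_add]
    refine g.eq_of_map_eq_of_nonneg T hg ?_
    simp [T, χ, isAdditiveOn_stoneInd.2 a trivial b trivial hab]
  · simp [hgD _ (hD₀ a ha), L]
  · show g _ = _
    rw [g.eq_of_map_eq_of_nonneg T hg (z' := (0, Finsupp.single a 1)) (by simp [T]),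
      hgD _ ⟨zero_mem _, Finsupp.single_mem_supported ℝ 1 ha⟩]
    simp [L]

end

/-- Compatibility theorem for finitely additive measures: given finite fams
`Ξ₀, Ξ₁` on Boolean subalgebras `S₀, S₁` of `B`, the following are equivalent:
(a) there is a fam on the subalgebra generated by `S₀ ∪ S₁` extending both;
(b) `Ξ₀(1) = Ξ₁(1)` and `a ≤ a'` with `a ∈ S₀`, `a' ∈ S₁` implies `Ξ₀(a) ≤ Ξ₁(a')`;
(c) for all `d, d' ∈ {0,1}`, `a ∈ S_d`, `a' ∈ S_{d'}`, `a ≤ a'` implies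
`Ξ_d(a) ≤ Ξ_{d'}(a')`. -/
theorem stmt5 {B : Type*} [BooleanAlgebra B] (S₀ S₁ : Set B)
    (hS₀ : IsSubalg S₀) (hS₁ : IsSubalg S₁)
    (Ξ₀ Ξ₁ : B → ℝ) (hfam₀ : IsFAMOn Ξ₀ S₀) (hfam₁ : IsFAMOn Ξ₁ S₁) :
    ((∃ Ξ : B → ℝ, IsFAMOn Ξ (subalgClosure (S₀ ∪ S₁)) ∧
        (∀ a ∈ S₀, Ξ a = Ξ₀ a) ∧ (∀ a ∈ S₁, Ξ a = Ξ₁ a)) ↔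
      (Ξ₀ ⊤ = Ξ₁ ⊤ ∧ ∀ a ∈ S₀, ∀ a' ∈ S₁, a ≤ a' → Ξ₀ a ≤ Ξ₁ a')) ∧
    ((Ξ₀ ⊤ = Ξ₁ ⊤ ∧ ∀ a ∈ S₀, ∀ a' ∈ S₁, a ≤ a' → Ξ₀ a ≤ Ξ₁ a') ↔
      (∀ d d' : Fin 2, ∀ a a' : B,
        a ∈ (if d = 0 then S₀ else S₁) → a' ∈ (if d' = 0 then S₀ else S₁) →
        a ≤ a' → (if d = 0 then Ξ₀ else Ξ₁) a ≤ (if d' = 0 then Ξ₀ else Ξ₁) a')) := by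
  have hsub := subset_subalgClosure (S₀ ∪ S₁)
  simp only [Fin.forall_fin_two, Fin.isValue, if_true, one_ne_zero, if_false]
  refine ⟨⟨?_, fun hc => ?_⟩, ⟨fun hc => ?_, fun h => ?_⟩⟩
  · rintro ⟨Ξ, hΞ, h₀, h₁⟩
    refine ⟨by rw [← h₀ ⊤ hS₀.top_mem, ← h₁ ⊤ hS₁.top_mem], fun a ha a' ha' hle => ?_⟩
    rw [← h₀ a ha, ← h₁ a' ha']
    exact hΞ.monotoneOn (subalgClosure_isSubalg _) (hsub (.inl ha)) (hsub (.inr ha')) hle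
  · obtain ⟨Ξ, hΞ, h₀, h₁⟩ := IsCompatible.exists_isFAMOn_univ_extending hc hS₀ hS₁
      hfam₀.isAdditiveOn hfam₁.isAdditiveOn
    exact ⟨Ξ, hΞ.mono (Set.subset_univ _), h₀, h₁⟩
  · exact ⟨⟨fun a a' ha ha' => hfam₀.monotoneOn hS₀ ha ha', fun a a' ha ha' => hc.2 a ha a' ha'⟩,
      fun a a' => IsCompatible.le_of_le_swap hc hS₀ hS₁ hfam₀.isAdditiveOn hfam₁.isAdditiveOn,
      fun a a' ha ha' => hfam₁.monotoneOn hS₁ ha ha'⟩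
  · exact ⟨le_antisymm (h.1.2 ⊤ ⊤ hS₀.top_mem hS₁.top_mem le_rfl)
      (h.2.1 ⊤ ⊤ hS₁.top_mem hS₀.top_mem le_rfl), fun a ha a' ha' => h.1.2 a a' ha ha'⟩
end

section
/- Let B be a Boolean algebra, C ⊆ B a subalgebra with a finite finitely additive measure Ξ : C → [0,∞), and b ∈ B. If z ∈ [0,∞) satisfies sup{ Ξ(a) : a ∈ C, a ≤ b } ≤ z ≤ inf{ Ξ(a) : a ∈ C, b ≤ a }, then there is a finitely additive measure Ξ' on the subalgebra generated by C ∪ {b}, extending Ξ, with Ξ'(b) = z. -/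
section Aux
variable {B : Type*} [BooleanAlgebra B] {C : Set B} {Ξ : B → ℝ}

lemma subalg_inf (hC : IsSubalg C) {a c : B} (ha : a ∈ C) (hc : c ∈ C) :
    a ⊓ c ∈ C := by
  have h := hC.2.2.2 _ (hC.2.2.1 _ (hC.2.2.2 a ha) _ (hC.2.2.2 c hc))
  simpa using h

lemma xi_mono (hC : IsSubalg C) (hfam : IsFAMOn Ξ C)
    {a c : B} (ha : a ∈ C) (hc : c ∈ C) (h : a ≤ c) : Ξ a ≤ Ξ c := by
  have hm : c ⊓ aᶜ ∈ C := subalg_inf hC hc (hC.2.2.2 a ha)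
  have hd : a ⊓ (c ⊓ aᶜ) = ⊥ := by
    rw [inf_left_comm]; simp
  have he : a ⊔ (c ⊓ aᶜ) = c := by
    rw [sup_inf_left]; simp [sup_eq_right.mpr h]
  have hadd := hfam.2.2 a ha _ hm hd
  rw [he] at hadd
  have h0 := hfam.2.1 _ hm
  linarith

lemma csSup_add_csSup_le {S T : Set ℝ} (hS : S.Nonempty) (hT : T.Nonempty) {M : ℝ}
    (h : ∀ x ∈ S, ∀ y ∈ T, x + y ≤ M) : sSup S + sSup T ≤ M := by
  have h1 : ∀ x ∈ S, x ≤ M - sSup T := by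
    intro x hx
    have h2 : sSup T ≤ M - x := by
      apply csSup_le hT
      intro y hy
      linarith [h x hx y hy]
    linarith
  linarith [csSup_le hS h1]

noncomputable def lamE (C : Set B) (Ξ : B → ℝ) (e c : B) : ℝ :=
  sSup (Ξ '' {a | a ∈ C ∧ a ≤ c ⊓ e})

lemma lamE_ne (hC : IsSubalg C) (e c : B) :
    (Ξ '' {a | a ∈ C ∧ a ≤ c ⊓ e}).Nonempty := ⟨Ξ ⊥, ⊥, ⟨hC.1, bot_le⟩, rfl⟩

lemma lamE_bdd (hC : IsSubalg C) (hfam : IsFAMOn Ξ C) (e c : B) :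
    BddAbove (Ξ '' {a | a ∈ C ∧ a ≤ c ⊓ e}) := by
  refine ⟨Ξ ⊤, ?_⟩
  rintro x ⟨a, ⟨haC, -⟩, rfl⟩
  exact xi_mono hC hfam haC hC.2.1 le_top

lemma lamE_nonneg (hC : IsSubalg C) (hfam : IsFAMOn Ξ C) (e c : B) :
    0 ≤ lamE C Ξ e c := by
  have := le_csSup (lamE_bdd hC hfam e c) (⟨⊥, ⟨hC.1, bot_le⟩, rfl⟩ :
    Ξ ⊥ ∈ Ξ '' {a | a ∈ C ∧ a ≤ c ⊓ e})
  rw [hfam.1] at this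
  exact this

lemma lamE_le (hC : IsSubalg C) (hfam : IsFAMOn Ξ C) (e : B) {c : B} (hc : c ∈ C) :
    lamE C Ξ e c ≤ Ξ c := by
  apply csSup_le (lamE_ne hC e c)
  rintro x ⟨a, ⟨haC, hale⟩, rfl⟩
  exact xi_mono hC hfam haC hc (hale.trans inf_le_left)

lemma lamE_add (hC : IsSubalg C) (hfam : IsFAMOn Ξ C) (e : B) {c d : B}
    (hc : c ∈ C) (hd : d ∈ C) (hdisj : c ⊓ d = ⊥) :
    lamE C Ξ e (c ⊔ d) = lamE C Ξ e c + lamE C Ξ e d := by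
  apply le_antisymm
  · apply csSup_le (lamE_ne hC e _)
    rintro x ⟨a, ⟨haC, hale⟩, rfl⟩
    have h1 : a ⊓ c ∈ C := subalg_inf hC haC hc
    have h2 : a ⊓ cᶜ ∈ C := subalg_inf hC haC (hC.2.2.2 c hc)
    have hds : (a ⊓ c) ⊓ (a ⊓ cᶜ) = ⊥ := by
      have : (a ⊓ c) ⊓ (a ⊓ cᶜ) ≤ c ⊓ cᶜ := inf_le_inf inf_le_right inf_le_right
      simpa using le_bot_iff.mp (by simpa using this)
    have hun : (a ⊓ c) ⊔ (a ⊓ cᶜ) = a := by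
      rw [← inf_sup_left]; simp
    have hsum : Ξ (a ⊓ c) + Ξ (a ⊓ cᶜ) = Ξ a := by
      have := hfam.2.2 _ h1 _ h2 hds
      rw [hun] at this; linarith
    have hae : a ≤ e := hale.trans inf_le_right
    have e1 : Ξ (a ⊓ c) ≤ lamE C Ξ e c :=
      le_csSup (lamE_bdd hC hfam e c)
        ⟨a ⊓ c, ⟨h1, le_inf inf_le_right (inf_le_left.trans hae)⟩, rfl⟩
    have e2 : Ξ (a ⊓ cᶜ) ≤ lamE C Ξ e d := by
      apply le_csSup (lamE_bdd hC hfam e d)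
      refine ⟨a ⊓ cᶜ, ⟨h2, le_inf ?_ (inf_le_left.trans hae)⟩, rfl⟩
      have ha' : a ⊓ cᶜ ≤ (c ⊔ d) ⊓ cᶜ :=
        inf_le_inf_right _ (hale.trans inf_le_left)
      calc a ⊓ cᶜ ≤ (c ⊔ d) ⊓ cᶜ := ha'
        _ ≤ d := by rw [inf_sup_right]; simp
    linarith
  · apply csSup_add_csSup_le (lamE_ne hC e c) (lamE_ne hC e d)
    rintro x ⟨a, ⟨haC, ha⟩, rfl⟩ y ⟨a', ⟨ha'C, ha'⟩, rfl⟩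
    have hdisj' : a ⊓ a' = ⊥ := by
      have : a ⊓ a' ≤ c ⊓ d := inf_le_inf (ha.trans inf_le_left) (ha'.trans inf_le_left)
      rw [hdisj] at this; exact le_bot_iff.mp this
    have := hfam.2.2 a haC a' ha'C hdisj'
    rw [← this]
    apply le_csSup (lamE_bdd hC hfam e _)
    refine ⟨a ⊔ a', ⟨hC.2.2.1 a haC a' ha'C, ?_⟩, rfl⟩
    exact sup_le (ha.trans (inf_le_inf_right e le_sup_left))
      (ha'.trans (inf_le_inf_right e le_sup_right))

lemma lamE_pair_le (hC : IsSubalg C) (hfam : IsFAMOn Ξ C) (e : B) {c : B} (hc : c ∈ C) :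
    lamE C Ξ e c + lamE C Ξ eᶜ c ≤ Ξ c := by
  apply csSup_add_csSup_le (lamE_ne hC e c) (lamE_ne hC eᶜ c)
  rintro x ⟨a, ⟨haC, ha⟩, rfl⟩ y ⟨a', ⟨ha'C, ha'⟩, rfl⟩
  have hdisj' : a ⊓ a' = ⊥ := by
    have : a ⊓ a' ≤ e ⊓ eᶜ := inf_le_inf (ha.trans inf_le_right) (ha'.trans inf_le_right)
    simpa using le_bot_iff.mp (by simpa using this)
  have hadd := hfam.2.2 a haC a' ha'C hdisj'
  rw [← hadd]
  exact xi_mono hC hfam (hC.2.2.1 a haC a' ha'C) hc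
    (sup_le (ha.trans inf_le_left) (ha'.trans inf_le_left))

lemma lamE_zero (hC : IsSubalg C) (hfam : IsFAMOn Ξ C) {e c : B} (h : c ⊓ e = ⊥) :
    lamE C Ξ e c = 0 := by
  apply le_antisymm _ (lamE_nonneg hC hfam e c)
  apply csSup_le (lamE_ne hC e c)
  rintro x ⟨a, ⟨-, hale⟩, rfl⟩
  rw [h] at hale
  rw [le_bot_iff.mp hale, hfam.1]

lemma lamE_self (hC : IsSubalg C) (hfam : IsFAMOn Ξ C) {e c : B} (hc : c ∈ C)
    (h : c ≤ e) : lamE C Ξ e c = Ξ c :=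
  le_antisymm (lamE_le hC hfam e hc)
    (le_csSup (lamE_bdd hC hfam e c) ⟨c, ⟨hc, le_inf le_rfl h⟩, rfl⟩)

end Aux

section Phi
variable {B : Type*} [BooleanAlgebra B] {C : Set B} {Ξ : B → ℝ}

noncomputable def phiA (C : Set B) (Ξ : B → ℝ) (e : B) (s : ℝ) (c : B) : ℝ :=
  (1 - s) * lamE C Ξ e c + s * (Ξ c - lamE C Ξ eᶜ c)

lemma phiA_nonneg (hC : IsSubalg C) (hfam : IsFAMOn Ξ C) (e : B) {s : ℝ}
    (hs0 : 0 ≤ s) (hs1 : s ≤ 1) {c : B} (hc : c ∈ C) : 0 ≤ phiA C Ξ e s c := by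
  have h1 := lamE_nonneg hC hfam e c
  have h2 := lamE_le hC hfam eᶜ hc
  unfold phiA
  have := mul_nonneg (by linarith : (0:ℝ) ≤ 1 - s) h1
  have := mul_nonneg hs0 (by linarith : (0:ℝ) ≤ Ξ c - lamE C Ξ eᶜ c)
  linarith

lemma phiA_le (hC : IsSubalg C) (hfam : IsFAMOn Ξ C) (e : B) {s : ℝ}
    (hs0 : 0 ≤ s) (hs1 : s ≤ 1) {c : B} (hc : c ∈ C) : phiA C Ξ e s c ≤ Ξ c := by
  have h1 := lamE_le hC hfam e hc
  have h2 := lamE_nonneg hC hfam eᶜ c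
  unfold phiA
  have := mul_nonneg (by linarith : (0:ℝ) ≤ 1 - s) (by linarith : (0:ℝ) ≤ Ξ c - lamE C Ξ e c)
  have := mul_nonneg hs0 h2
  nlinarith

lemma phiA_add (hC : IsSubalg C) (hfam : IsFAMOn Ξ C) (e : B) (s : ℝ) {c d : B}
    (hc : c ∈ C) (hd : d ∈ C) (hdisj : c ⊓ d = ⊥) :
    phiA C Ξ e s (c ⊔ d) = phiA C Ξ e s c + phiA C Ξ e s d := by
  unfold phiA
  rw [lamE_add hC hfam e hc hd hdisj, lamE_add hC hfam eᶜ hc hd hdisj,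
    hfam.2.2 c hc d hd hdisj]
  ring

lemma phiA_zero (hC : IsSubalg C) (hfam : IsFAMOn Ξ C) {e : B} (s : ℝ) {c : B}
    (hc : c ∈ C) (h : c ⊓ e = ⊥) : phiA C Ξ e s c = 0 := by
  have h1 : lamE C Ξ e c = 0 := lamE_zero hC hfam h
  have h2 : lamE C Ξ eᶜ c = Ξ c := by
    apply lamE_self hC hfam hc
    exact (disjoint_iff.mpr h).le_compl_right
  unfold phiA
  rw [h1, h2]
  ring

lemma phiA_sup (hC : IsSubalg C) (hfam : IsFAMOn Ξ C) {e : B} (s : ℝ) {c d : B}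
    (hc : c ∈ C) (hd : d ∈ C) (h : c ⊓ d ⊓ e = ⊥) :
    phiA C Ξ e s (c ⊔ d) = phiA C Ξ e s c + phiA C Ξ e s d := by
  have hdc : d ⊓ cᶜ ∈ C := subalg_inf hC hd (hC.2.2.2 c hc)
  have hdcc : d ⊓ c ∈ C := subalg_inf hC hd hc
  have e1 : c ⊔ (d ⊓ cᶜ) = c ⊔ d := by rw [sup_inf_left]; simp
  have hd1 : c ⊓ (d ⊓ cᶜ) = ⊥ := by rw [inf_left_comm]; simp
  have h2 : phiA C Ξ e s (c ⊔ d) = phiA C Ξ e s c + phiA C Ξ e s (d ⊓ cᶜ) := by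
    rw [← e1]; exact phiA_add hC hfam e s hc hdc hd1
  have e2 : (d ⊓ c) ⊔ (d ⊓ cᶜ) = d := by rw [← inf_sup_left]; simp
  have hd2 : (d ⊓ c) ⊓ (d ⊓ cᶜ) = ⊥ := by
    have hle : (d ⊓ c) ⊓ (d ⊓ cᶜ) ≤ c ⊓ cᶜ := inf_le_inf inf_le_right inf_le_right
    simpa using le_bot_iff.mp (by simpa using hle)
  have h3 : phiA C Ξ e s d = phiA C Ξ e s (d ⊓ c) + phiA C Ξ e s (d ⊓ cᶜ) := by
    conv_lhs => rw [← e2]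
    exact phiA_add hC hfam e s hdcc hdc hd2
  have h4 : phiA C Ξ e s (d ⊓ c) = 0 := by
    apply phiA_zero hC hfam s hdcc
    rw [inf_comm d c]; exact h
  linarith

lemma phiA_congr (hC : IsSubalg C) (hfam : IsFAMOn Ξ C) {e : B} (s : ℝ) {c d : B}
    (hc : c ∈ C) (hd : d ∈ C) (h : c ⊓ e = d ⊓ e) : phiA C Ξ e s c = phiA C Ξ e s d := by
  have key : ∀ u ∈ C, ∀ v ∈ C, u ⊓ e = v ⊓ e →
      phiA C Ξ e s u = phiA C Ξ e s (u ⊓ v) := by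
    intro u hu v hv huv
    have h1 : u ⊓ v ∈ C := subalg_inf hC hu hv
    have h2 : u ⊓ vᶜ ∈ C := subalg_inf hC hu (hC.2.2.2 v hv)
    have e1 : (u ⊓ v) ⊔ (u ⊓ vᶜ) = u := by rw [← inf_sup_left]; simp
    have hd1 : (u ⊓ v) ⊓ (u ⊓ vᶜ) = ⊥ := by
      have hle : (u ⊓ v) ⊓ (u ⊓ vᶜ) ≤ v ⊓ vᶜ := inf_le_inf inf_le_right inf_le_right
      simpa using le_bot_iff.mp (by simpa using hle)
    have h3 : phiA C Ξ e s u = phiA C Ξ e s (u ⊓ v) + phiA C Ξ e s (u ⊓ vᶜ) := by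
      conv_lhs => rw [← e1]
      exact phiA_add hC hfam e s h1 h2 hd1
    have h4 : phiA C Ξ e s (u ⊓ vᶜ) = 0 := by
      apply phiA_zero hC hfam s h2
      rw [inf_right_comm, huv, inf_right_comm]
      simp
    linarith
  have k1 := key c hc d hd h
  have k2 := key d hd c hc h.symm
  rw [inf_comm d c] at k2
  rw [k1, k2]

end Phi

section BoolId
variable {B : Type*} [BooleanAlgebra B]

lemma rep_inf (c₁ c₂ e : B) : ((c₁ ⊓ e) ⊔ (c₂ ⊓ eᶜ)) ⊓ e = c₁ ⊓ e := by
  rw [inf_sup_right, inf_assoc, inf_assoc]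
  simp

lemma rep_inf' (c₁ c₂ e : B) : ((c₁ ⊓ e) ⊔ (c₂ ⊓ eᶜ)) ⊓ eᶜ = c₂ ⊓ eᶜ := by
  have := rep_inf c₂ c₁ eᶜ
  rw [compl_compl] at this
  rw [sup_comm] at this
  exact this

lemma rep_compl (c₁ c₂ e : B) :
    ((c₁ ⊓ e) ⊔ (c₂ ⊓ eᶜ))ᶜ = (c₁ᶜ ⊓ e) ⊔ (c₂ᶜ ⊓ eᶜ) := by
  have hd : Disjoint ((c₁ ⊓ e) ⊔ (c₂ ⊓ eᶜ)) ((c₁ᶜ ⊓ e) ⊔ (c₂ᶜ ⊓ eᶜ)) := by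
    rw [disjoint_sup_left, disjoint_sup_right, disjoint_sup_right]
    exact ⟨⟨disjoint_compl_right.mono inf_le_left inf_le_left,
            disjoint_compl_right.mono inf_le_right inf_le_right⟩,
          ⟨disjoint_compl_left.mono inf_le_right inf_le_right,
            disjoint_compl_right.mono inf_le_left inf_le_left⟩⟩
  have hs : ((c₁ ⊓ e) ⊔ (c₂ ⊓ eᶜ)) ⊔ ((c₁ᶜ ⊓ e) ⊔ (c₂ᶜ ⊓ eᶜ)) = ⊤ := by
    rw [sup_sup_sup_comm, ← inf_sup_right, ← inf_sup_right]
    simp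
  exact (IsCompl.of_eq (disjoint_iff.mp hd) hs).compl_eq

lemma self_rep (c e : B) : (c ⊓ e) ⊔ (c ⊓ eᶜ) = c := by
  rw [← inf_sup_left]; simp

end BoolId

/-- One-element extension of a finitely additive measure: if `z ∈ [0,∞)` lies
between `sup{ Ξ(a) : a ∈ C, a ≤ b }` and `inf{ Ξ(a) : a ∈ C, b ≤ a }` (stated
pointwise), then `Ξ` extends to a fam `Ξ'` on the subalgebra generated by
`C ∪ {b}` with `Ξ'(b) = z`. -/
theorem stmt6 {B : Type*} [BooleanAlgebra B] (C : Set B) (hC : IsSubalg C)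
    (Ξ : B → ℝ) (hfam : IsFAMOn Ξ C) (b : B) (z : ℝ) (hz0 : 0 ≤ z)
    (hzsup : ∀ a ∈ C, a ≤ b → Ξ a ≤ z) (hzinf : ∀ a ∈ C, b ≤ a → z ≤ Ξ a) :
    ∃ Ξ' : B → ℝ, IsFAMOn Ξ' (subalgClosure (C ∪ {b})) ∧
      (∀ a ∈ C, Ξ' a = Ξ a) ∧ Ξ' b = z := by
  classical
  set A := lamE C Ξ b ⊤ with hA
  set R := Ξ ⊤ - lamE C Ξ bᶜ ⊤ with hR
  have hAz : A ≤ z := by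
    rw [hA]
    apply csSup_le (lamE_ne hC b ⊤)
    rintro x ⟨a, ⟨haC, hale⟩, rfl⟩
    exact hzsup a haC (hale.trans inf_le_right)
  have hzR : z ≤ R := by
    have h1 : lamE C Ξ bᶜ ⊤ ≤ Ξ ⊤ - z := by
      apply csSup_le (lamE_ne hC bᶜ ⊤)
      rintro x ⟨a, ⟨haC, hale⟩, rfl⟩
      have hac : aᶜ ∈ C := hC.2.2.2 a haC
      have hba : b ≤ aᶜ := by
        have h2 : a ≤ bᶜ := hale.trans inf_le_right
        have := compl_le_compl h2
        rwa [compl_compl] at this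
      have h3 := hzinf aᶜ hac hba
      have h4 : Ξ (a ⊔ aᶜ) = Ξ a + Ξ aᶜ := hfam.2.2 a haC aᶜ hac (by simp)
      rw [sup_compl_eq_top] at h4
      linarith
    rw [hR]; linarith
  have hAR : A ≤ R := by
    have := lamE_pair_le hC hfam b (hC.2.1)
    rw [hA, hR]; linarith
  set t := if A = R then (0:ℝ) else (z - A) / (R - A) with ht
  have ht0 : 0 ≤ t := by
    rw [ht]; split_ifs with h
    · norm_num
    · exact div_nonneg (by linarith) (by linarith)
  have ht1 : t ≤ 1 := by
    rw [ht]; split_ifs with h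
    · norm_num
    · have hlt : 0 < R - A := by
        rcases lt_or_eq_of_le hAR with h' | h'
        · linarith
        · exact absurd h' h
      rw [div_le_one hlt]; linarith
  have htz : (1 - t) * A + t * R = z := by
    rw [ht]; split_ifs with h
    · have : A = z := le_antisymm hAz (h ▸ hzR)
      simp [this]
    · have hne : R - A ≠ 0 := by
        intro he
        exact h (by linarith)
      field_simp
      ring
  have hφtop : phiA C Ξ b t ⊤ = z := by
    unfold phiA
    rw [← hA]
    rw [show t * (Ξ ⊤ - lamE C Ξ bᶜ ⊤) = t * R by rw [hR]]
    exact htz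
  -- the generated algebra
  set P : B → Prop := fun x => ∃ c₁, c₁ ∈ C ∧ ∃ c₂, c₂ ∈ C ∧ x = (c₁ ⊓ b) ⊔ (c₂ ⊓ bᶜ)
    with hPdef
  set F : B → ℝ := fun x =>
    if h : P x then phiA C Ξ b t h.choose + phiA C Ξ bᶜ (1 - t) h.choose_spec.2.choose
    else 0 with hF
  have hval : ∀ c₁ ∈ C, ∀ c₂ ∈ C,
      F ((c₁ ⊓ b) ⊔ (c₂ ⊓ bᶜ)) = phiA C Ξ b t c₁ + phiA C Ξ bᶜ (1 - t) c₂ := by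
    intro c₁ h1 c₂ h2
    have hPx : P ((c₁ ⊓ b) ⊔ (c₂ ⊓ bᶜ)) := ⟨c₁, h1, c₂, h2, rfl⟩
    rw [hF]
    simp only [dif_pos hPx]
    have hd1 : hPx.choose ∈ C := hPx.choose_spec.1
    have hd2 : hPx.choose_spec.2.choose ∈ C := hPx.choose_spec.2.choose_spec.1
    have heq : (c₁ ⊓ b) ⊔ (c₂ ⊓ bᶜ) =
        (hPx.choose ⊓ b) ⊔ (hPx.choose_spec.2.choose ⊓ bᶜ) :=
      hPx.choose_spec.2.choose_spec.2
    have e1 : hPx.choose ⊓ b = c₁ ⊓ b := by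
      rw [← rep_inf hPx.choose hPx.choose_spec.2.choose b, ← heq, rep_inf]
    have e2 : hPx.choose_spec.2.choose ⊓ bᶜ = c₂ ⊓ bᶜ := by
      rw [← rep_inf' hPx.choose hPx.choose_spec.2.choose b, ← heq, rep_inf']
    rw [phiA_congr hC hfam t hd1 h1 e1, phiA_congr hC hfam (1 - t) hd2 h2 e2]
  have hDalg : IsSubalg {x | P x} := by
    refine ⟨⟨⊥, hC.1, ⊥, hC.1, by simp⟩, ⟨⊤, hC.2.1, ⊤, hC.2.1, by simp⟩, ?_, ?_⟩
    · rintro x ⟨c₁, h1, c₂, h2, rfl⟩ y ⟨d₁, g1, d₂, g2, rfl⟩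
      refine ⟨c₁ ⊔ d₁, hC.2.2.1 _ h1 _ g1, c₂ ⊔ d₂, hC.2.2.1 _ h2 _ g2, ?_⟩
      rw [inf_sup_right, inf_sup_right]
      exact sup_sup_sup_comm _ _ _ _
    · rintro x ⟨c₁, h1, c₂, h2, rfl⟩
      exact ⟨c₁ᶜ, hC.2.2.2 _ h1, c₂ᶜ, hC.2.2.2 _ h2, (rep_compl c₁ c₂ b)⟩
  have hDsup : C ∪ {b} ⊆ {x | P x} := by
    rintro x (hx | hx)
    · exact ⟨x, hx, x, hx, (self_rep x b).symm⟩
    · rw [Set.mem_singleton_iff] at hx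
      subst hx
      exact ⟨⊤, hC.2.1, ⊥, hC.1, by simp⟩
  have hsub : subalgClosure (C ∪ {b}) ⊆ {x | P x} := by
    intro x hx
    have hx' : x ∈ ⋂₀ {C' : Set B | IsSubalg C' ∧ (C ∪ {b}) ⊆ C'} := hx
    exact Set.mem_sInter.mp hx' _ ⟨hDalg, hDsup⟩
  have hpsi : ∀ c : B, phiA C Ξ bᶜ (1 - t) c = Ξ c - phiA C Ξ b t c := by
    intro c
    simp only [phiA, compl_compl]
    ring
  refine ⟨F, ⟨?_, ?_, ?_⟩, ?_, ?_⟩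
  · -- F ⊥ = 0
    have hb : (⊥ : B) = (⊥ ⊓ b) ⊔ (⊥ ⊓ bᶜ) := by simp
    rw [hb, hval ⊥ hC.1 ⊥ hC.1,
      phiA_zero hC hfam t hC.1 (by simp), phiA_zero hC hfam (1 - t) hC.1 (by simp)]
    ring
  · -- nonneg
    intro a ha
    obtain ⟨c₁, h1, c₂, h2, rfl⟩ := hsub ha
    rw [hval c₁ h1 c₂ h2]
    exact add_nonneg (phiA_nonneg hC hfam b ht0 ht1 h1)
      (phiA_nonneg hC hfam bᶜ (by linarith) (by linarith) h2)
  · -- additive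
    intro x hx y hy hxy
    obtain ⟨c₁, h1, c₂, h2, hxe⟩ := hsub hx
    obtain ⟨d₁, g1, d₂, g2, hye⟩ := hsub hy
    subst hxe; subst hye
    have hrep : ((c₁ ⊓ b) ⊔ (c₂ ⊓ bᶜ)) ⊔ ((d₁ ⊓ b) ⊔ (d₂ ⊓ bᶜ)) =
        ((c₁ ⊔ d₁) ⊓ b) ⊔ ((c₂ ⊔ d₂) ⊓ bᶜ) := by
      rw [inf_sup_right, inf_sup_right]
      exact sup_sup_sup_comm _ _ _ _
    have hk1 : c₁ ⊓ d₁ ⊓ b = ⊥ := by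
      apply le_bot_iff.mp
      rw [← hxy]
      apply le_inf
      · exact le_trans (le_trans (inf_le_inf_right b inf_le_left) le_rfl) le_sup_left
      · exact le_trans (inf_le_inf_right b inf_le_right) le_sup_left
    have hk2 : c₂ ⊓ d₂ ⊓ bᶜ = ⊥ := by
      apply le_bot_iff.mp
      rw [← hxy]
      apply le_inf
      · exact le_trans (inf_le_inf_right bᶜ inf_le_left) le_sup_right
      · exact le_trans (inf_le_inf_right bᶜ inf_le_right) le_sup_right
    rw [hrep, hval _ (hC.2.2.1 _ h1 _ g1) _ (hC.2.2.1 _ h2 _ g2),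
      hval c₁ h1 c₂ h2, hval d₁ g1 d₂ g2,
      phiA_sup hC hfam t h1 g1 hk1, phiA_sup hC hfam (1 - t) h2 g2 hk2]
    ring
  · -- extends Ξ
    intro a ha
    conv_lhs => rw [← self_rep a b]
    rw [hval a ha a ha, hpsi a]
    ring
  · -- F b = z
    rw [show b = (⊤ ⊓ b) ⊔ (⊥ ⊓ bᶜ) by simp, hval ⊤ hC.2.1 ⊥ hC.1,
      phiA_zero hC hfam (1 - t) hC.1 (by simp), hφtop]
    ring
end

section
/- Let Ξ₀ be a finitely additive measure on a Boolean subalgebra of a Boolean algebra B with 0 < δ := Ξ₀(1) < ∞, and let ⟨b_i : i ∈ I⟩ be a family in B. Assume that for every finite J ⊆ I and every b in the domain of Ξ₀ with Ξ₀(b) > 0, we have b ∧ ⋀_{i∈J} b_i ≠ 0. Then there exists a finitely additive measure Ξ on all of B extending Ξ₀ with Ξ(b_i) = δ for every i ∈ I. -/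
/-! ### Auxiliary: ultrafilters on a Boolean algebra -/

/-- `u` is an ultrafilter (as a set) on the Boolean algebra `B`. -/
def Ult {B : Type*} [BooleanAlgebra B] (u : Set B) : Prop :=
  ⊥ ∉ u ∧ (∀ x ∈ u, ∀ y ∈ u, x ⊓ y ∈ u) ∧ (∀ x ∈ u, ∀ y : B, x ≤ y → y ∈ u) ∧
    (∀ x : B, x ∈ u ∨ xᶜ ∈ u)

/-- Boolean prime ideal theorem: every nonzero element lies in an ultrafilter. -/
lemma ult_exists {B : Type*} [BooleanAlgebra B] {x : B} (hx : x ≠ ⊥) :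
    ∃ u : Set B, Ult u ∧ x ∈ u := by
  classical
  set S : Set (Set B) :=
    {u | ⊥ ∉ u ∧ x ∈ u ∧ (∀ a ∈ u, ∀ c ∈ u, a ⊓ c ∈ u) ∧ ∀ a ∈ u, ∀ c : B, a ≤ c → c ∈ u}
    with hS
  have hbase : {y : B | x ≤ y} ∈ S := by
    refine ⟨fun h => hx (le_bot_iff.1 h), le_refl x, ?_, ?_⟩
    · intro a ha c hc; exact le_inf ha hc
    · intro a ha c hac; exact ha.trans hac
  have hchainS : ∀ c ⊆ S, IsChain (· ⊆ ·) c → c.Nonempty →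
      ∃ ub ∈ S, ∀ s ∈ c, s ⊆ ub := by
    intro c hcS hchain hcne
    obtain ⟨u₀, hu₀⟩ := hcne
    refine ⟨⋃₀ c, ⟨?_, ⟨u₀, hu₀, (hcS hu₀).2.1⟩, ?_, ?_⟩, fun s hs => Set.subset_sUnion_of_mem hs⟩
    · rintro ⟨u, huc, hbu⟩
      exact (hcS huc).1 hbu
    · rintro a ⟨u₁, h1c, ha⟩ cc ⟨u₂, h2c, hc2⟩
      rcases hchain.total h1c h2c with h | h
      · exact ⟨u₂, h2c, (hcS h2c).2.2.1 a (h ha) cc hc2⟩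
      · exact ⟨u₁, h1c, (hcS h1c).2.2.1 a ha cc (h hc2)⟩
    · rintro a ⟨u₁, h1c, ha⟩ cc hac
      exact ⟨u₁, h1c, (hcS h1c).2.2.2 a ha cc hac⟩
  obtain ⟨m, hsub, hmax⟩ := zorn_subset_nonempty S hchainS _ hbase
  · have hmS : m ∈ S := hmax.1
    have hxmem : x ∈ m := hmS.2.1
    refine ⟨m, ⟨hmS.1, hmS.2.2.1, hmS.2.2.2, ?_⟩, hxmem⟩
    intro y
    by_contra hcon
    push_neg at hcon
    obtain ⟨hy, hyc⟩ := hcon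
    set m' : Set B := {z | ∃ w ∈ m, w ⊓ y ≤ z} with hm'
    have hmm' : m ⊆ m' := fun z hz => ⟨z, hz, inf_le_left⟩
    have hym' : y ∈ m' := ⟨⊤, hmS.2.2.2 x hxmem ⊤ le_top, by simp⟩
    by_cases hbm' : ⊥ ∈ m'
    · obtain ⟨w, hwm, hwy⟩ := hbm'
      have hwyc : w ≤ yᶜ := le_compl_iff_disjoint_right.2 (disjoint_iff_inf_le.mpr hwy)
      exact hyc (hmS.2.2.2 w hwm yᶜ hwyc)
    · have hm'S : m' ∈ S := by
        refine ⟨hbm', hmm' hxmem, ?_, ?_⟩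
        · rintro a ⟨w₁, h1, hle1⟩ cc ⟨w₂, h2, hle2⟩
          refine ⟨w₁ ⊓ w₂, hmS.2.2.1 w₁ h1 w₂ h2, ?_⟩
          calc (w₁ ⊓ w₂) ⊓ y ≤ (w₁ ⊓ y) ⊓ (w₂ ⊓ y) :=
                le_inf (inf_le_inf_right y inf_le_left) (inf_le_inf_right y inf_le_right)
            _ ≤ a ⊓ cc := inf_le_inf hle1 hle2
        · rintro a ⟨w, h1, hle⟩ cc hac; exact ⟨w, h1, hle.trans hac⟩
      exact hy ((hmax.2 hm'S hmm') hym')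

/-- The type of ultrafilters on `B`. -/
def UltP (B : Type*) [BooleanAlgebra B] := {u : Set B // Ult u}

open Classical in
/-- The "indicator function" of `x : B` on ultrafilters. -/
noncomputable def chi {B : Type*} [BooleanAlgebra B] (x : B) : UltP B → ℝ :=
  fun u => if x ∈ u.1 then 1 else 0

lemma chi_mem {B : Type*} [BooleanAlgebra B] {x : B} {u : UltP B} (h : x ∈ u.1) :
    chi x u = 1 := by simp [chi, h]

lemma chi_not_mem {B : Type*} [BooleanAlgebra B] {x : B} {u : UltP B} (h : x ∉ u.1) :
    chi x u = 0 := by simp [chi, h]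

lemma chi_nonneg {B : Type*} [BooleanAlgebra B] (x : B) (u : UltP B) : 0 ≤ chi x u := by
  by_cases h : x ∈ u.1 <;> simp [chi, h]

lemma chi_le_one {B : Type*} [BooleanAlgebra B] (x : B) (u : UltP B) : chi x u ≤ 1 := by
  by_cases h : x ∈ u.1 <;> simp [chi, h]

lemma chi_abs_le_one {B : Type*} [BooleanAlgebra B] (x : B) (u : UltP B) : |chi x u| ≤ 1 := by
  rw [abs_le]; constructor
  · linarith [chi_nonneg x u]
  · exact chi_le_one x u

lemma ult_notMem {B : Type*} [BooleanAlgebra B] (u : UltP B) {z : B} (hz : zᶜ ∈ u.1) :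
    z ∉ u.1 := fun hzmem =>
  u.2.1 (inf_compl_eq_bot (a := z) ▸ u.2.2.1 z hzmem zᶜ hz)

lemma ult_compl_mem {B : Type*} [BooleanAlgebra B] (u : UltP B) {z : B} (hz : z ∉ u.1) :
    zᶜ ∈ u.1 := (u.2.2.2.2 z).resolve_left hz

/-- The span of the indicators inside the space of functions on ultrafilters. -/
noncomputable def espan (B : Type*) [BooleanAlgebra B] : Submodule ℝ (UltP B → ℝ) :=
  Submodule.span ℝ (Set.range (chi (B := B)))

/-- The indicator of `x`, as an element of `espan B`. -/
noncomputable def chiE {B : Type*} [BooleanAlgebra B] (x : B) : espan B :=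
  ⟨chi x, Submodule.subset_span ⟨x, rfl⟩⟩

lemma espan_bdd {B : Type*} [BooleanAlgebra B] (f : espan B) :
    ∃ M : ℝ, ∀ u, |(f : UltP B → ℝ) u| ≤ M := by
  obtain ⟨g, hg⟩ := f
  refine Submodule.span_induction (p := fun g _ => ∃ M : ℝ, ∀ u, |g u| ≤ M) ?_ ?_ ?_ ?_ hg
  · rintro g ⟨x, rfl⟩
    exact ⟨1, chi_abs_le_one x⟩
  · exact ⟨0, fun u => by simp⟩
  · rintro g₁ g₂ _ _ ⟨M₁, h₁⟩ ⟨M₂, h₂⟩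
    exact ⟨M₁ + M₂, fun u => (abs_add_le _ _).trans (add_le_add (h₁ u) (h₂ u))⟩
  · rintro c g _ ⟨M, h⟩
    refine ⟨|c| * M, fun u => ?_⟩
    rw [Pi.smul_apply, smul_eq_mul, abs_mul]
    exact mul_le_mul_of_nonneg_left (h u) (abs_nonneg c)

/-- The atom of the finite subalgebra generated by `t'` corresponding to `s ⊆ t'`. -/
def atomOf {B : Type*} [BooleanAlgebra B] {C : Set B} [DecidableEq C] (t' s : Finset C) : B :=
  s.inf (fun a => (a : B)) ⊓ (t' \ s).inf (fun a => ((a : B))ᶜ)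

section Key

variable {B : Type*} [BooleanAlgebra B] {ι : Type*} {C : Set B} {Ξ₀ : B → ℝ} {b : ι → B}

/-- The key combinatorial lemma: for any finite linear combination of elements of `C` and
any finite `J`, there is an ultrafilter containing `⋀_{i∈J} b i` on which the combination is
at least its `Ξ₀`-average. -/
lemma key_lemma (hC : IsSubalg C) (hfam : IsFAMOn Ξ₀ C) (hδ : 0 < Ξ₀ ⊤)
    (hcomp : ∀ J : Finset ι, ∀ a ∈ C, 0 < Ξ₀ a → a ⊓ J.inf b ≠ ⊥)
    (x : C →₀ ℝ) (J : Finset ι) :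
    ∃ u : UltP B, J.inf b ∈ u.1 ∧
      (x.sum fun a c => c * Ξ₀ ↑a) ≤ Ξ₀ ⊤ * (x.sum fun a c => c * chi (↑a) u) := by
  classical
  obtain ⟨hbot, htop, hsupC, hcomplC⟩ := hC
  obtain ⟨hΞ0, hΞpos, hΞadd⟩ := hfam
  have hinfC : ∀ a ∈ C, ∀ c ∈ C, a ⊓ c ∈ C := by
    intro a ha c hc
    have h1 := hcomplC _ (hsupC _ (hcomplC a ha) _ (hcomplC c hc))
    simpa using h1
  set t := x.support with ht
  have hinf_mem : ∀ (s : Finset C) (g : C → B), (∀ a : C, g a ∈ C) → s.inf g ∈ C := by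
    intro s g hg
    induction s using Finset.induction_on with
    | empty => simpa using htop
    | @insert a s ha ih =>
      rw [Finset.inf_insert]
      exact hinfC _ (hg a) _ ih
  have he_mem : ∀ t' s : Finset C, atomOf t' s ∈ C := fun t' s =>
    hinfC _ (hinf_mem s _ (fun a => a.2)) _ (hinf_mem _ _ (fun a => hcomplC _ a.2))
  -- the partition identity
  have part : ∀ t' : Finset C, ∀ d ∈ C, (∑ s ∈ t'.powerset, Ξ₀ (d ⊓ atomOf t' s)) = Ξ₀ d := by
    intro t'
    induction t' using Finset.induction_on with
    | empty =>
      intro d hd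
      simp [atomOf]
    | @insert a₁ t₀ ha₁ ih =>
      intro d hd
      have key1 : ∀ s ∈ t₀.powerset, atomOf (insert a₁ t₀) s = (↑a₁ : B)ᶜ ⊓ atomOf t₀ s := by
        intro s hs
        rw [Finset.mem_powerset] at hs
        have ha₁s : a₁ ∉ s := fun h => ha₁ (hs h)
        have h1 : insert a₁ t₀ \ s = insert a₁ (t₀ \ s) := by
          ext y
          by_cases hya : y = a₁ <;>
            simp [hya, ha₁s, Finset.mem_sdiff, Finset.mem_insert] <;> tauto
        rw [atomOf, atomOf, h1, Finset.inf_insert, inf_left_comm]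
      have key2 : ∀ s ∈ t₀.powerset,
          atomOf (insert a₁ t₀) (insert a₁ s) = (↑a₁ : B) ⊓ atomOf t₀ s := by
        intro s hs
        rw [Finset.mem_powerset] at hs
        have h1 : insert a₁ t₀ \ insert a₁ s = t₀ \ s := by
          ext y
          by_cases hya : y = a₁ <;>
            simp [hya, ha₁, Finset.mem_sdiff, Finset.mem_insert] <;> tauto
        rw [atomOf, atomOf, h1, Finset.inf_insert, inf_assoc]
      have hdisj : Disjoint t₀.powerset (t₀.powerset.image (insert a₁)) := by
        rw [Finset.disjoint_left]
        intro s hs hs'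
        rw [Finset.mem_powerset] at hs
        obtain ⟨s', _, rfl⟩ := Finset.mem_image.1 hs'
        exact ha₁ (hs (Finset.mem_insert_self a₁ s'))
      have hinj : ∀ s₁ ∈ t₀.powerset, ∀ s₂ ∈ t₀.powerset,
          insert a₁ s₁ = insert a₁ s₂ → s₁ = s₂ := by
        intro s₁ h₁ s₂ h₂ h
        rw [Finset.mem_powerset] at h₁ h₂
        have e₁ : a₁ ∉ s₁ := fun hh => ha₁ (h₁ hh)
        have e₂ : a₁ ∉ s₂ := fun hh => ha₁ (h₂ hh)
        have := congrArg (fun z : Finset C => z.erase a₁) h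
        simpa [Finset.erase_insert, e₁, e₂] using this
      rw [Finset.powerset_insert, Finset.sum_union hdisj, Finset.sum_image hinj]
      have hsum1 : (∑ s ∈ t₀.powerset, Ξ₀ (d ⊓ atomOf (insert a₁ t₀) s))
          = Ξ₀ (d ⊓ (↑a₁ : B)ᶜ) := by
        rw [← ih (d ⊓ (↑a₁ : B)ᶜ) (hinfC d hd _ (hcomplC _ a₁.2))]
        apply Finset.sum_congr rfl
        intro s hs
        rw [key1 s hs, ← inf_assoc]
      have hsum2 : (∑ s ∈ t₀.powerset, Ξ₀ (d ⊓ atomOf (insert a₁ t₀) (insert a₁ s)))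
          = Ξ₀ (d ⊓ (↑a₁ : B)) := by
        rw [← ih (d ⊓ (↑a₁ : B)) (hinfC d hd _ a₁.2)]
        apply Finset.sum_congr rfl
        intro s hs
        rw [key2 s hs, ← inf_assoc]
      rw [hsum1, hsum2]
      have hdisj2 : (d ⊓ (↑a₁ : B)ᶜ) ⊓ (d ⊓ (↑a₁ : B)) = ⊥ := by
        have h2 : (d ⊓ (↑a₁ : B)ᶜ) ⊓ (d ⊓ (↑a₁ : B)) ≤ (↑a₁ : B)ᶜ ⊓ (↑a₁ : B) :=
          inf_le_inf inf_le_right inf_le_right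
        rw [compl_inf_eq_bot] at h2
        exact le_bot_iff.1 h2
      have hsupeq : (d ⊓ (↑a₁ : B)ᶜ) ⊔ (d ⊓ (↑a₁ : B)) = d := by
        rw [← inf_sup_left, compl_sup_eq_top, inf_top_eq]
      rw [← hΞadd _ (hinfC d hd _ (hcomplC _ a₁.2)) _ (hinfC d hd _ a₁.2) hdisj2, hsupeq]
  have hsum_top : (∑ s ∈ t.powerset, Ξ₀ (atomOf t s)) = Ξ₀ ⊤ := by
    have := part t ⊤ htop
    simpa [top_inf_eq] using this
  have ha_split : ∀ a₀ ∈ t, Ξ₀ ↑a₀ = ∑ s ∈ t.powerset,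
      (if a₀ ∈ s then Ξ₀ (atomOf t s) else 0) := by
    intro a₀ ha₀
    rw [← part t ↑a₀ a₀.2]
    apply Finset.sum_congr rfl
    intro s hs
    rw [Finset.mem_powerset] at hs
    by_cases h : a₀ ∈ s
    · rw [if_pos h]
      congr 1
      exact inf_eq_right.2 (le_trans inf_le_left (Finset.inf_le h))
    · rw [if_neg h]
      have hmem : a₀ ∈ t \ s := Finset.mem_sdiff.2 ⟨ha₀, h⟩
      have h2 : (↑a₀ : B) ⊓ atomOf t s ≤ (↑a₀ : B) ⊓ (↑a₀ : B)ᶜ :=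
        inf_le_inf_left _ (le_trans inf_le_right (Finset.inf_le hmem))
      rw [inf_compl_eq_bot] at h2
      rw [le_bot_iff.1 h2, hΞ0]
  -- rewrite the left sum via atoms
  have hv : (x.sum fun a c => c * Ξ₀ ↑a)
      = ∑ s ∈ t.powerset, (∑ a ∈ s, x a) * Ξ₀ (atomOf t s) := by
    rw [Finsupp.sum]
    calc (∑ a ∈ t, x a * Ξ₀ ↑a)
        = ∑ a ∈ t, ∑ s ∈ t.powerset, (if a ∈ s then x a * Ξ₀ (atomOf t s) else 0) := by
          apply Finset.sum_congr rfl
          intro a ha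
          rw [ha_split a ha, Finset.mul_sum]
          apply Finset.sum_congr rfl
          intro s _
          rw [mul_ite, mul_zero]
      _ = ∑ s ∈ t.powerset, ∑ a ∈ t, (if a ∈ s then x a * Ξ₀ (atomOf t s) else 0) :=
          Finset.sum_comm
      _ = ∑ s ∈ t.powerset, (∑ a ∈ s, x a) * Ξ₀ (atomOf t s) := by
          apply Finset.sum_congr rfl
          intro s hs
          rw [Finset.mem_powerset] at hs
          rw [Finset.sum_ite_mem, Finset.inter_eq_right.2 hs, ← Finset.sum_mul]
  set P := t.powerset.filter (fun s => 0 < Ξ₀ (atomOf t s)) with hP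
  have hzero : ∀ s ∈ t.powerset, s ∉ P → Ξ₀ (atomOf t s) = 0 := by
    intro s hs hsP
    rw [hP, Finset.mem_filter] at hsP
    push_neg at hsP
    exact le_antisymm (hsP hs) (hΞpos _ (he_mem t s))
  have hPsum : (∑ s ∈ P, Ξ₀ (atomOf t s)) = Ξ₀ ⊤ := by
    rw [← hsum_top]
    exact Finset.sum_subset (Finset.filter_subset _ _) (fun s hs h => hzero s hs h)
  have hvP : (x.sum fun a c => c * Ξ₀ ↑a)
      = ∑ s ∈ P, (∑ a ∈ s, x a) * Ξ₀ (atomOf t s) := by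
    rw [hv]
    exact (Finset.sum_subset (Finset.filter_subset _ _)
      (fun s hs h => by rw [hzero s hs h, mul_zero])).symm
  have hPne : P.Nonempty := by
    by_contra h
    rw [Finset.not_nonempty_iff_eq_empty] at h
    rw [h, Finset.sum_empty] at hPsum
    exact hδ.ne' hPsum.symm
  have hex : ∃ s ∈ P, (x.sum fun a c => c * Ξ₀ ↑a) ≤ Ξ₀ ⊤ * (∑ a ∈ s, x a) := by
    by_contra hcon
    push_neg at hcon
    have hlt : (x.sum fun a c => c * Ξ₀ ↑a) < (x.sum fun a c => c * Ξ₀ ↑a) := by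
      set v := (x.sum fun a c => c * Ξ₀ ↑a) with hvdef
      calc v = ∑ s ∈ P, (∑ a ∈ s, x a) * Ξ₀ (atomOf t s) := hvP
        _ < ∑ s ∈ P, (v / Ξ₀ ⊤) * Ξ₀ (atomOf t s) := by
            apply Finset.sum_lt_sum_of_nonempty hPne
            intro s hs
            have h1 : 0 < Ξ₀ (atomOf t s) := (Finset.mem_filter.1 hs).2
            have h2 : (∑ a ∈ s, x a) < v / Ξ₀ ⊤ := by
              rw [lt_div_iff₀ hδ, mul_comm]
              exact hcon s hs
            exact mul_lt_mul_of_pos_right h2 h1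
        _ = (v / Ξ₀ ⊤) * ∑ s ∈ P, Ξ₀ (atomOf t s) := by rw [Finset.mul_sum]
        _ = v := by rw [hPsum, div_mul_cancel₀ _ hδ.ne']
    exact lt_irrefl _ hlt
  obtain ⟨s, hsP, hsv⟩ := hex
  have hst : s ⊆ t := Finset.mem_powerset.1 (Finset.mem_filter.1 hsP).1
  have hspos : 0 < Ξ₀ (atomOf t s) := (Finset.mem_filter.1 hsP).2
  have hne := hcomp J (atomOf t s) (he_mem t s) hspos
  obtain ⟨u, hu, hmem⟩ := ult_exists hne
  refine ⟨⟨u, hu⟩, hu.2.2.1 _ hmem _ inf_le_right, ?_⟩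
  have hes : atomOf t s ∈ u := hu.2.2.1 _ hmem _ inf_le_left
  have hsum_chi : (x.sum fun a c => c * chi (↑a) ⟨u, hu⟩) = ∑ a ∈ s, x a := by
    rw [Finsupp.sum]
    have hcong : ∀ a ∈ t, x a * chi (↑a) ⟨u, hu⟩ = if a ∈ s then x a else 0 := by
      intro a ha
      by_cases h : a ∈ s
      · have hau : (↑a : B) ∈ u :=
          hu.2.2.1 _ hes _ (le_trans inf_le_left (Finset.inf_le h))
        rw [chi_mem (u := ⟨u, hu⟩) hau, mul_one, if_pos h]
      · have hmem2 : a ∈ t \ s := Finset.mem_sdiff.2 ⟨ha, h⟩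
        have hc : ((↑a : B))ᶜ ∈ u :=
          hu.2.2.1 _ hes _ (le_trans inf_le_right (Finset.inf_le hmem2))
        have hnm : (↑a : B) ∉ u := ult_notMem ⟨u, hu⟩ hc
        rw [chi_not_mem (u := ⟨u, hu⟩) hnm, mul_zero, if_neg h]
    rw [Finset.sum_congr rfl hcong, Finset.sum_ite_mem, Finset.inter_eq_right.2 hst]
  rw [hsum_chi]
  exact hsv

end Key

set_option maxHeartbeats 1000000 in
/-- If `Ξ₀` is a fam on a Boolean subalgebra `C` of `B` with `0 < δ := Ξ₀(1) < ∞`,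
and `⟨b i : i ∈ ι⟩` is a family in `B` such that for every finite `J ⊆ ι` and every
`b ∈ C` of positive measure, `b ⊓ ⋀_{i ∈ J} b i ≠ ⊥`, then there is a fam `Ξ` on
all of `B` extending `Ξ₀` with `Ξ(b i) = δ` for every `i`. -/
theorem stmt7 {B : Type*} [BooleanAlgebra B] {ι : Type*} (C : Set B) (hC : IsSubalg C)
    (Ξ₀ : B → ℝ) (hfam : IsFAMOn Ξ₀ C) (hδ : 0 < Ξ₀ ⊤)
    (b : ι → B)
    (hcomp : ∀ J : Finset ι, ∀ a ∈ C, 0 < Ξ₀ a → a ⊓ J.inf b ≠ ⊥) :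
    ∃ Ξ : B → ℝ, IsFAMOn Ξ (Set.univ : Set B) ∧
      (∀ a ∈ C, Ξ a = Ξ₀ a) ∧ ∀ i, Ξ (b i) = Ξ₀ ⊤ := by
  classical
  obtain ⟨hbot, htop, hsupC, hcomplC⟩ := id hC
  obtain ⟨hΞ0, hΞpos, hΞadd⟩ := id hfam
  -- each `S J` is nonempty
  have hSJ : ∀ J : Finset ι, ∃ u : UltP B, J.inf b ∈ u.1 := by
    intro J
    have h := hcomp J ⊤ htop hδ
    rw [top_inf_eq] at h
    obtain ⟨u, hu, hm⟩ := ult_exists h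
    exact ⟨⟨u, hu⟩, hm⟩
  haveI hSJne : ∀ J : Finset ι, Nonempty {u : UltP B // J.inf b ∈ u.1} := by
    intro J
    obtain ⟨u, hu⟩ := hSJ J
    exact ⟨⟨u, hu⟩⟩
  -- the sup over `S J` and the inf over `J`
  set Msup : Finset ι → (UltP B → ℝ) → ℝ :=
    fun J g => ⨆ u : {u : UltP B // J.inf b ∈ u.1}, g ↑u with hMsup_def
  set q : (UltP B → ℝ) → ℝ := fun g => ⨅ J : Finset ι, Msup J g with hq_def
  have hbddA : ∀ (J : Finset ι) (g : UltP B → ℝ) (M : ℝ), (∀ u, |g u| ≤ M) →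
      BddAbove (Set.range fun u : {u : UltP B // J.inf b ∈ u.1} => g ↑u) := by
    intro J g M hM
    refine ⟨M, ?_⟩
    rintro y ⟨u, rfl⟩
    exact (abs_le.1 (hM ↑u)).2
  have hMsup_le : ∀ (J : Finset ι) (g : UltP B → ℝ) (r : ℝ),
      (∀ u : UltP B, J.inf b ∈ u.1 → g u ≤ r) → Msup J g ≤ r := by
    intro J g r h
    haveI := hSJne J
    exact ciSup_le (fun u => h ↑u u.2)
  have hle_Msup : ∀ (J : Finset ι) (g : UltP B → ℝ) (M : ℝ), (∀ u, |g u| ≤ M) →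
      ∀ u : UltP B, J.inf b ∈ u.1 → g u ≤ Msup J g := by
    intro J g M hM u hu
    exact le_ciSup (hbddA J g M hM) ⟨u, hu⟩
  have hMsup_lb : ∀ (J : Finset ι) (g : UltP B → ℝ) (M : ℝ), (∀ u, |g u| ≤ M) →
      -M ≤ Msup J g := by
    intro J g M hM
    obtain ⟨u, hu⟩ := hSJ J
    exact le_trans (neg_le_of_abs_le (hM u)) (hle_Msup J g M hM u hu)
  have hq_le : ∀ (g : UltP B → ℝ) (M : ℝ), (∀ u, |g u| ≤ M) →
      ∀ J : Finset ι, q g ≤ Msup J g := by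
    intro g M hM J
    refine ciInf_le ⟨-M, ?_⟩ J
    rintro y ⟨J', rfl⟩
    exact hMsup_lb J' g M hM
  have hle_q : ∀ (g : UltP B → ℝ) (r : ℝ), (∀ J : Finset ι, r ≤ Msup J g) → r ≤ q g := by
    intro g r h
    exact le_ciInf h
  have hMsup_mono : ∀ (J J' : Finset ι) (g : UltP B → ℝ) (M : ℝ), (∀ u, |g u| ≤ M) →
      J ⊆ J' → Msup J' g ≤ Msup J g := by
    intro J J' g M hM hJJ'
    apply hMsup_le
    intro u hu
    exact hle_Msup J g M hM u (u.2.2.2.1 _ hu _ (Finset.inf_mono hJJ'))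
  -- the sublinear functional
  set N : espan B → ℝ := fun f => Ξ₀ ⊤ * q ↑f with hN_def
  have hN_add : ∀ f g : espan B, N (f + g) ≤ N f + N g := by
    intro f g
    obtain ⟨M₁, hM₁⟩ := espan_bdd f
    obtain ⟨M₂, hM₂⟩ := espan_bdd g
    have hMfg : ∀ u, |(↑(f + g) : UltP B → ℝ) u| ≤ M₁ + M₂ := by
      intro u
      have : (↑(f + g) : UltP B → ℝ) u = (↑f : UltP B → ℝ) u + (↑g : UltP B → ℝ) u := rfl
      rw [this]
      exact (abs_add_le _ _).trans (add_le_add (hM₁ u) (hM₂ u))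
    have step : ∀ J₁ J₂ : Finset ι, q ↑(f + g) ≤ Msup J₁ ↑f + Msup J₂ ↑g := by
      intro J₁ J₂
      have h1 : q ↑(f + g) ≤ Msup (J₁ ∪ J₂) ↑(f + g) :=
        hq_le _ _ hMfg (J₁ ∪ J₂)
      have h2 : Msup (J₁ ∪ J₂) ↑(f + g) ≤ Msup (J₁ ∪ J₂) ↑f + Msup (J₁ ∪ J₂) ↑g := by
        apply hMsup_le
        intro u hu
        have e1 : (↑(f + g) : UltP B → ℝ) u = (↑f : UltP B → ℝ) u + (↑g : UltP B → ℝ) u := rfl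
        rw [e1]
        exact add_le_add (hle_Msup _ _ M₁ hM₁ u hu) (hle_Msup _ _ M₂ hM₂ u hu)
      have h3 : Msup (J₁ ∪ J₂) ↑f ≤ Msup J₁ ↑f :=
        hMsup_mono J₁ (J₁ ∪ J₂) _ M₁ hM₁ Finset.subset_union_left
      have h4 : Msup (J₁ ∪ J₂) ↑g ≤ Msup J₂ ↑g :=
        hMsup_mono J₂ (J₁ ∪ J₂) _ M₂ hM₂ Finset.subset_union_right
      linarith
    have h4 : ∀ J₂ : Finset ι, q ↑(f + g) - Msup J₂ ↑g ≤ q ↑f := by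
      intro J₂
      exact hle_q _ _ (fun J₁ => sub_le_iff_le_add.2 (step J₁ J₂))
    have h5 : q ↑(f + g) - q ↑f ≤ q ↑g :=
      hle_q _ _ (fun J₂ => sub_le_comm.1 (h4 J₂))
    have h6 : q ↑(f + g) ≤ q ↑f + q ↑g := by linarith
    rw [hN_def]
    calc Ξ₀ ⊤ * q ↑(f + g) ≤ Ξ₀ ⊤ * (q ↑f + q ↑g) :=
          mul_le_mul_of_nonneg_left h6 hδ.le
      _ = Ξ₀ ⊤ * q ↑f + Ξ₀ ⊤ * q ↑g := by ring
  have hN_hom : ∀ c : ℝ, 0 < c → ∀ f : espan B, N (c • f) = c * N f := by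
    intro c hc f
    have hcoe : (↑(c • f) : UltP B → ℝ) = fun u => c * (↑f : UltP B → ℝ) u := by
      funext u; rfl
    have hMs : ∀ J : Finset ι, Msup J ↑(c • f) = c * Msup J ↑f := by
      intro J
      rw [hcoe, hMsup_def]
      haveI := hSJne J
      rw [Real.mul_iSup_of_nonneg hc.le]
    have hqs : q ↑(c • f) = c * q ↑f := by
      rw [hq_def]
      simp only [hMs]
      rw [Real.mul_iInf_of_nonneg hc.le]
    rw [hN_def]
    simp only [hqs]
    ring
  -- the partial linear functional on the span of `chi '' C`
  set T : (C →₀ ℝ) →ₗ[ℝ] espan B :=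
    Finsupp.linearCombination ℝ (fun a : C => chiE (↑a : B)) with hT_def
  set L : (C →₀ ℝ) →ₗ[ℝ] ℝ :=
    Finsupp.linearCombination ℝ (fun a : C => Ξ₀ ↑a) with hL_def
  have hL_apply : ∀ x : C →₀ ℝ, L x = x.sum fun a c => c * Ξ₀ ↑a := by
    intro x
    rw [hL_def, Finsupp.linearCombination_apply]
    apply Finsupp.sum_congr
    intro a _
    rw [smul_eq_mul]
  have hT_apply : ∀ (x : C →₀ ℝ) (u : UltP B),
      (↑(T x) : UltP B → ℝ) u = x.sum fun a c => c * chi (↑a) u := by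
    intro x u
    have h1 := Finsupp.apply_linearCombination ℝ
      ((LinearMap.proj u).comp (espan B).subtype) (fun a : C => chiE (↑a : B)) x
    have h2 : (↑(T x) : UltP B → ℝ) u
        = ((LinearMap.proj u).comp (espan B).subtype) (T x) := rfl
    rw [h2, hT_def, h1, Finsupp.linearCombination_apply]
    apply Finsupp.sum_congr
    intro a _
    rfl
  -- the key estimate
  have hkey : ∀ (x : C →₀ ℝ) (J : Finset ι), ∃ u : UltP B, J.inf b ∈ u.1 ∧
      L x ≤ Ξ₀ ⊤ * (↑(T x) : UltP B → ℝ) u := by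
    intro x J
    obtain ⟨u, hu, hle⟩ := key_lemma hC hfam hδ hcomp x J
    refine ⟨u, hu, ?_⟩
    rw [hL_apply, hT_apply]
    exact hle
  -- L bounded by the sublinear functional
  have hLN : ∀ x : C →₀ ℝ, L x ≤ N (T x) := by
    intro x
    obtain ⟨M, hM⟩ := espan_bdd (T x)
    have h1 : ∀ J : Finset ι, L x / Ξ₀ ⊤ ≤ Msup J ↑(T x) := by
      intro J
      obtain ⟨u, hu, hle⟩ := hkey x J
      rw [div_le_iff₀ hδ] at *
      have h2 : (↑(T x) : UltP B → ℝ) u ≤ Msup J ↑(T x) := hle_Msup J _ M hM u hu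
      nlinarith
    have h2 : L x / Ξ₀ ⊤ ≤ q ↑(T x) := hle_q _ _ h1
    rw [div_le_iff₀ hδ] at h2
    show L x ≤ Ξ₀ ⊤ * q ↑(T x)
    rw [mul_comm]
    exact h2
  -- the value of N at zero
  have hN0 : N (0 : espan B) = 0 := by
    have hcz : ((0 : espan B) : UltP B → ℝ) = fun _ => 0 := rfl
    have hM0 : ∀ J : Finset ι, Msup J (fun _ : UltP B => 0) = 0 := by
      intro J
      apply le_antisymm
      · exact hMsup_le J _ 0 (fun u _ => le_refl 0)
      · obtain ⟨u, hu⟩ := hSJ J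
        exact hle_Msup J (fun _ : UltP B => 0) 0 (fun u => by simp) u hu
    have hq0 : q (fun _ : UltP B => 0) = 0 := by
      apply le_antisymm
      · have := hq_le (fun _ : UltP B => 0) 0 (fun u => by simp) ∅
        rw [hM0 ∅] at this
        exact this
      · exact hle_q (fun _ : UltP B => 0) 0 (fun J => (hM0 J).ge)
    show Ξ₀ ⊤ * q ↑(0 : espan B) = 0
    rw [hcz, hq0, mul_zero]
  -- kernel inclusion, to define the partial functional on the range of T
  have hker : LinearMap.ker T ≤ LinearMap.ker L := by
    intro x hx
    rw [LinearMap.mem_ker] at hx ⊢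
    have h1 : L x ≤ 0 := by
      have h := hLN x
      rw [hx, hN0] at h
      exact h
    have h2 : -L x ≤ 0 := by
      have h := hLN (-x)
      rw [map_neg T x, hx, neg_zero, hN0, map_neg L x] at h
      exact h
    linarith
  -- the partial linear functional
  set φ₀ : ↥(LinearMap.range T) →ₗ[ℝ] ℝ :=
    (Submodule.liftQ (LinearMap.ker T) L hker).comp
      (T.quotKerEquivRange.symm.toLinearMap) with hφ₀_def
  have hφ₀_apply : ∀ x : C →₀ ℝ,
      φ₀ ⟨T x, LinearMap.mem_range_self T x⟩ = L x := by
    intro x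
    rw [hφ₀_def, LinearMap.comp_apply]
    have h1 : T.quotKerEquivRange.symm ⟨T x, LinearMap.mem_range_self T x⟩
        = (LinearMap.ker T).mkQ x := T.quotKerEquivRange_symm_apply_image x _
    have h2 : (T.quotKerEquivRange.symm.toLinearMap) ⟨T x, LinearMap.mem_range_self T x⟩
        = (LinearMap.ker T).mkQ x := h1
    rw [h2, Submodule.mkQ_apply, Submodule.liftQ_apply]
  -- Hahn–Banach
  have hφ₀N : ∀ w : ↥(LinearMap.range T), φ₀ w ≤ N ↑w := by
    rintro ⟨w, hw⟩
    obtain ⟨x, rfl⟩ := hw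
    show φ₀ ⟨T x, _⟩ ≤ N (T x)
    rw [hφ₀_apply x]
    exact hLN x
  obtain ⟨g, hg_eq, hg_le⟩ := exists_extension_of_le_sublinear
    ⟨LinearMap.range T, φ₀⟩ N hN_hom hN_add hφ₀N
  -- the extension
  refine ⟨fun x => g (chiE x), ⟨?_, ?_, ?_⟩, ?_, ?_⟩
  · -- Ξ ⊥ = 0
    have h1 : chiE (⊥ : B) = (0 : espan B) := by
      apply Subtype.ext
      funext u
      exact chi_not_mem (u := u) u.2.1
    show g (chiE (⊥ : B)) = 0
    rw [h1, map_zero]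
  · -- nonnegativity
    intro x _
    have h1 : g (-(chiE x)) ≤ N (-(chiE x)) := hg_le _
    have hcz : ((-(chiE x) : espan B) : UltP B → ℝ) = fun u => -(chi x u) := rfl
    have h2 : q ((-(chiE x) : espan B) : UltP B → ℝ) ≤ 0 := by
      have h3 : q ((-(chiE x) : espan B) : UltP B → ℝ)
          ≤ Msup ∅ ((-(chiE x) : espan B) : UltP B → ℝ) := by
        apply hq_le _ 1
        intro u
        rw [hcz]
        simpa using chi_abs_le_one x u
      have h4 : Msup ∅ ((-(chiE x) : espan B) : UltP B → ℝ) ≤ 0 := by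
        apply hMsup_le
        intro u _
        rw [hcz]
        simp [chi_nonneg x u]
      linarith
    have h5 : N (-(chiE x)) ≤ 0 := by
      show Ξ₀ ⊤ * q ((-(chiE x) : espan B) : UltP B → ℝ) ≤ 0
      have := mul_le_mul_of_nonneg_left h2 hδ.le
      rw [mul_zero] at this
      exact this
    rw [map_neg] at h1
    show (0:ℝ) ≤ g (chiE x)
    linarith
  · -- additivity
    intro x _ y _ hxy
    have h1 : chiE (x ⊔ y) = chiE x + chiE y := by
      apply Subtype.ext
      funext u
      have hadd : chi (x ⊔ y) u = chi x u + chi y u := by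
        by_cases hx : x ∈ u.1
        · by_cases hy : y ∈ u.1
          · exact absurd (hxy ▸ u.2.2.1 x hx y hy) u.2.1
          · rw [chi_mem (u.2.2.2.1 x hx (x ⊔ y) le_sup_left), chi_mem hx, chi_not_mem hy]
            ring
        · by_cases hy : y ∈ u.1
          · rw [chi_mem (u.2.2.2.1 y hy (x ⊔ y) le_sup_right), chi_not_mem hx, chi_mem hy]
            ring
          · have hxc := ult_compl_mem u hx
            have hyc := ult_compl_mem u hy
            have hm : xᶜ ⊓ yᶜ ∈ u.1 := u.2.2.1 _ hxc _ hyc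
            have hsc : (x ⊔ y)ᶜ ∈ u.1 := by rwa [compl_sup]
            rw [chi_not_mem (ult_notMem u hsc), chi_not_mem hx, chi_not_mem hy]
            ring
      show chi (x ⊔ y) u = ((chiE x : UltP B → ℝ) + (chiE y : UltP B → ℝ)) u
      rw [Pi.add_apply]
      exact hadd
    show g (chiE (x ⊔ y)) = g (chiE x) + g (chiE y)
    rw [h1, map_add]
  · -- extends Ξ₀
    intro a ha
    show g (chiE a) = Ξ₀ a
    have h1 : chiE a = T (Finsupp.single (⟨a, ha⟩ : C) 1) := by
      rw [hT_def, Finsupp.linearCombination_single, one_smul]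
    have h3 := hg_eq ⟨T (Finsupp.single (⟨a, ha⟩ : C) 1), LinearMap.mem_range_self T _⟩
    have h4 : L (Finsupp.single (⟨a, ha⟩ : C) 1) = Ξ₀ a := by
      rw [hL_def, Finsupp.linearCombination_single, smul_eq_mul, one_mul]
    rw [h1, ← h4, ← hφ₀_apply (Finsupp.single (⟨a, ha⟩ : C) 1)]
    exact h3
  · -- Ξ (b i) = Ξ₀ ⊤
    intro i
    show g (chiE (b i)) = Ξ₀ ⊤
    have hMi : ∀ u : UltP B, ({i} : Finset ι).inf b ∈ u.1 → b i ∈ u.1 := by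
      intro u hu
      rwa [Finset.inf_singleton] at hu
    have hupper : g (chiE (b i)) ≤ Ξ₀ ⊤ := by
      have h1 : g (chiE (b i)) ≤ N (chiE (b i)) := hg_le _
      have h2 : q (chi (b i)) ≤ 1 := by
        have h3 : q (chi (b i)) ≤ Msup {i} (chi (b i)) :=
          hq_le _ 1 (chi_abs_le_one (b i)) {i}
        have h4 : Msup {i} (chi (b i)) ≤ 1 :=
          hMsup_le _ _ _ (fun u _ => chi_le_one (b i) u)
        linarith
      have h5 : N (chiE (b i)) ≤ Ξ₀ ⊤ := by
        show Ξ₀ ⊤ * q (chi (b i)) ≤ Ξ₀ ⊤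
        calc Ξ₀ ⊤ * q (chi (b i)) ≤ Ξ₀ ⊤ * 1 := mul_le_mul_of_nonneg_left h2 hδ.le
          _ = Ξ₀ ⊤ := mul_one _
      linarith
    have hlower : Ξ₀ ⊤ ≤ g (chiE (b i)) := by
      have h1 : g (-(chiE (b i))) ≤ N (-(chiE (b i))) := hg_le _
      have hcz : ((-(chiE (b i)) : espan B) : UltP B → ℝ) = fun u => -(chi (b i) u) := rfl
      have h2 : q ((-(chiE (b i)) : espan B) : UltP B → ℝ) ≤ -1 := by
        have h3 : q ((-(chiE (b i)) : espan B) : UltP B → ℝ)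
            ≤ Msup {i} ((-(chiE (b i)) : espan B) : UltP B → ℝ) := by
          apply hq_le _ 1
          intro u
          rw [hcz]
          simpa using chi_abs_le_one (b i) u
        have h4 : Msup {i} ((-(chiE (b i)) : espan B) : UltP B → ℝ) ≤ -1 := by
          apply hMsup_le
          intro u hu
          have hh := chi_mem (u := u) (hMi u hu)
          show ((-(chiE (b i)) : espan B) : UltP B → ℝ) u ≤ -1
          rw [hcz]
          simp [hh]
        linarith
      have h5 : N (-(chiE (b i))) ≤ -(Ξ₀ ⊤) := by
        show Ξ₀ ⊤ * q ((-(chiE (b i)) : espan B) : UltP B → ℝ) ≤ -(Ξ₀ ⊤)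
        calc Ξ₀ ⊤ * q ((-(chiE (b i)) : espan B) : UltP B → ℝ)
            ≤ Ξ₀ ⊤ * (-1) := mul_le_mul_of_nonneg_left h2 hδ.le
          _ = -(Ξ₀ ⊤) := by ring
      rw [map_neg] at h1
      linarith
    linarith
end

section
/- Let P be a forcing notion (preorder), K a finite nonempty set, Ī = ⟨I_k : k ∈ K⟩ a family of finite nonempty pairwise disjoint sets with W := ⋃_k I_k, Ξ a probability finitely additive measure on P(K), and Q ⊆ P. Then M_Ī^Ξ(Q) = 1 if and only if Q is |W₀|-linked, where W₀ := ⋃{ I_k : k ∈ K, Ξ({k}) ≠ 0 }. Here M_Ī^Ξ(Q) := min over q̄ ∈ Q^W of μ_Ī^Ξ(q̄), and μ_Ī^Ξ(q̄) := max over q ∈ P of Σ_{k∈K} (|{ ℓ ∈ I_k : q ≤ q_ℓ }| / |I_k|) · Ξ({k}). -/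
open Classical

/-- `mu w I qs` = `μ_Ī^Ξ(q̄)`: the supremum over `q ∈ P` of
`Σ_{k ∈ K} Ξ({k}) · |{ℓ ∈ I_k : q ≤ q_ℓ}| / |I_k|`, where the probability fam `Ξ`
on the powerset of the finite set `K` is given by its weights `w k = Ξ({k})`. -/
noncomputable def mu {P : Type*} [Preorder P] {K : Type*} [Fintype K]
    (w : K → ℝ) (I : K → Finset ℕ) (qs : ℕ → P) : ℝ :=
  sSup {x : ℝ | ∃ q : P,
    x = ∑ k : K, w k * ({ℓ | ℓ ∈ I k ∧ q ≤ qs ℓ}.ncard : ℝ) / ((I k).card : ℝ)}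

/-- `Mnum w I Q` = `M_Ī^Ξ(Q)`: the infimum (minimum) of `μ_Ī^Ξ(q̄)` over all
`q̄ ∈ Q^W`, where `W = ⋃_{k} I_k`. -/
noncomputable def Mnum {P : Type*} [Preorder P] {K : Type*} [Fintype K]
    (w : K → ℝ) (I : K → Finset ℕ) (Q : Set P) : ℝ :=
  sInf {x : ℝ | ∃ qs : ℕ → P,
    (∀ ℓ ∈ Finset.univ.biUnion I, qs ℓ ∈ Q) ∧ x = mu w I qs}

lemma term_nonneg (w : ℝ) (hw : 0 ≤ w) (s : Finset ℕ) (A : Set ℕ) :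
    0 ≤ w * (A.ncard : ℝ) / (s.card : ℝ) := by positivity

lemma term_le_w (w : ℝ) (hw : 0 ≤ w) (s : Finset ℕ) (hs : s.Nonempty)
    (A : Set ℕ) (hA : A ⊆ ↑s) :
    w * (A.ncard : ℝ) / (s.card : ℝ) ≤ w := by
  have hc : (0:ℝ) < s.card := by exact_mod_cast hs.card_pos
  have hn : (A.ncard : ℝ) ≤ (s.card : ℝ) := by
    have := Set.ncard_le_ncard hA s.finite_toSet
    rw [Set.ncard_coe_finset] at this
    exact_mod_cast this
  rw [div_le_iff₀ hc]
  nlinarith [Nat.cast_nonneg (α := ℝ) A.ncard]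

section main
variable {P : Type*} [Preorder P] {K : Type*} [Fintype K]

lemma sum_nonneg' (w : K → ℝ) (hw : ∀ k, 0 ≤ w k) (I : K → Finset ℕ)
    (qs : ℕ → P) (q : P) :
    0 ≤ ∑ k : K, w k * ({ℓ | ℓ ∈ I k ∧ q ≤ qs ℓ}.ncard : ℝ) / ((I k).card : ℝ) :=
  Finset.sum_nonneg fun k _ => term_nonneg _ (hw k) _ _

lemma sum_le_one (w : K → ℝ) (hw : ∀ k, 0 ≤ w k) (hw1 : (∑ k : K, w k) = 1)
    (I : K → Finset ℕ) (hIne : ∀ k, (I k).Nonempty) (qs : ℕ → P) (q : P) :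
    (∑ k : K, w k * ({ℓ | ℓ ∈ I k ∧ q ≤ qs ℓ}.ncard : ℝ) / ((I k).card : ℝ)) ≤ 1 := by
  rw [← hw1]
  exact Finset.sum_le_sum fun k _ =>
    term_le_w _ (hw k) _ (hIne k) _ (fun ℓ hℓ => hℓ.1)

lemma mu_bddAbove (w : K → ℝ) (hw : ∀ k, 0 ≤ w k) (hw1 : (∑ k : K, w k) = 1)
    (I : K → Finset ℕ) (hIne : ∀ k, (I k).Nonempty) (qs : ℕ → P) :
    BddAbove {x : ℝ | ∃ q : P,
      x = ∑ k : K, w k * ({ℓ | ℓ ∈ I k ∧ q ≤ qs ℓ}.ncard : ℝ) / ((I k).card : ℝ)} :=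
  ⟨1, fun x ⟨q, hq⟩ => hq ▸ sum_le_one w hw hw1 I hIne qs q⟩

lemma mu_le_one [Nonempty P] (w : K → ℝ) (hw : ∀ k, 0 ≤ w k)
    (hw1 : (∑ k : K, w k) = 1) (I : K → Finset ℕ) (hIne : ∀ k, (I k).Nonempty)
    (qs : ℕ → P) : mu w I qs ≤ 1 := by
  refine csSup_le ?_ ?_
  · exact ⟨_, Classical.arbitrary P, rfl⟩
  rintro x ⟨q, rfl⟩
  exact sum_le_one w hw hw1 I hIne qs q

lemma mu_nonneg [Nonempty P] (w : K → ℝ) (hw : ∀ k, 0 ≤ w k)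
    (hw1 : (∑ k : K, w k) = 1) (I : K → Finset ℕ) (hIne : ∀ k, (I k).Nonempty)
    (qs : ℕ → P) : 0 ≤ mu w I qs := by
  refine le_trans (sum_nonneg' w hw I qs (Classical.arbitrary P))
    (le_csSup (mu_bddAbove w hw hw1 I hIne qs) ⟨Classical.arbitrary P, rfl⟩)

end main

/-- For a finite `K`, a probability fam `Ξ` on `P(K)` (given by weights `w`), and
`Ī = ⟨I k⟩` a family of finite nonempty pairwise disjoint sets:
`M_Ī^Ξ(Q) = 1` iff `Q` is `|W₀|`-linked, where `W₀ = ⋃{ I_k : Ξ({k}) ≠ 0 }`. -/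
theorem stmt9 {P : Type*} [Preorder P] {K : Type*} [Fintype K] [Nonempty K]
    (w : K → ℝ) (hw : ∀ k, 0 ≤ w k) (hw1 : (∑ k : K, w k) = 1)
    (I : K → Finset ℕ) (hIne : ∀ k, (I k).Nonempty)
    (hIdisj : ∀ k k', k ≠ k' → Disjoint (I k) (I k'))
    (Q : Set P) (hQ : Q.Nonempty) :
    Mnum w I Q = 1 ↔
      ∀ F : Finset P, ↑F ⊆ Q →
        F.card ≤ ((Finset.univ.filter fun k => w k ≠ 0).biUnion I).card →
        ∃ r : P, ∀ p ∈ F, r ≤ p := by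
  classical
  obtain ⟨q0, hq0⟩ := hQ
  haveI : Nonempty P := ⟨q0⟩
  set W0 : Finset ℕ := (Finset.univ.filter fun k => w k ≠ 0).biUnion I with hW0def
  -- the Mnum set is nonempty
  have hMne : {x : ℝ | ∃ qs : ℕ → P,
      (∀ ℓ ∈ Finset.univ.biUnion I, qs ℓ ∈ Q) ∧ x = mu w I qs}.Nonempty :=
    ⟨mu w I (fun _ => q0), fun _ => q0, fun _ _ => hq0, rfl⟩
  have hMbdd : BddBelow {x : ℝ | ∃ qs : ℕ → P,
      (∀ ℓ ∈ Finset.univ.biUnion I, qs ℓ ∈ Q) ∧ x = mu w I qs} := by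
    refine ⟨0, ?_⟩
    rintro x ⟨qs, -, rfl⟩
    exact mu_nonneg w hw hw1 I hIne qs
  constructor
  · -- Mnum = 1 → linked
    intro hM F hFQ hFcard
    by_contra hno
    push_neg at hno
    -- injection from F into W0
    obtain ⟨u, huW0, hucard⟩ := Finset.exists_subset_card_eq hFcard
    have e : (u : Finset ℕ) ≃ (F : Finset P) := Finset.equivOfCardEq hucard
    set qs : ℕ → P := fun ℓ => if h : ℓ ∈ u then ((e ⟨ℓ, h⟩ : F) : P) else q0 with hqs
    have hqsQ : ∀ ℓ ∈ Finset.univ.biUnion I, qs ℓ ∈ Q := by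
      intro ℓ _
      by_cases h : ℓ ∈ u
      · simp only [hqs, dif_pos h]; exact hFQ (e ⟨ℓ, h⟩).2
      · simp only [hqs, dif_neg h]; exact hq0
    -- ε
    have hKfne : (Finset.univ.filter fun k => w k ≠ 0).Nonempty := by
      by_contra hcon
      rw [Finset.not_nonempty_iff_eq_empty] at hcon
      have : (∑ k : K, w k) = 0 := by
        apply Finset.sum_eq_zero
        intro k hk
        by_contra hk0
        have : k ∈ Finset.univ.filter fun k => w k ≠ 0 := by
          simp [hk0]
        simp [hcon] at this
      rw [hw1] at this; norm_num at this
    set ε : ℝ := (Finset.univ.filter fun k => w k ≠ 0).inf' hKfne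
      (fun k => w k / ((I k).card : ℝ)) with hεdef
    have hεpos : 0 < ε := by
      rw [hεdef, Finset.lt_inf'_iff]
      intro k hk
      rw [Finset.mem_filter] at hk
      have hc : (0:ℝ) < (I k).card := by exact_mod_cast (hIne k).card_pos
      exact div_pos (lt_of_le_of_ne (hw k) (Ne.symm hk.2)) hc
    -- mu qs ≤ 1 - ε
    have hmu : mu w I qs ≤ 1 - ε := by
      refine csSup_le ?_ ?_
      · exact ⟨_, q0, rfl⟩
      rintro x ⟨q, rfl⟩
      obtain ⟨p, hpF, hqp⟩ := hno q
      set ℓ0 : ℕ := (e.symm ⟨p, hpF⟩ : ℕ)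
      have hℓ0u : ℓ0 ∈ u := (e.symm ⟨p, hpF⟩).2
      have hqsℓ0 : qs ℓ0 = p := by
        simp only [hqs, dif_pos hℓ0u]
        have : (⟨ℓ0, hℓ0u⟩ : {x // x ∈ u}) = e.symm ⟨p, hpF⟩ := rfl
        rw [this, Equiv.apply_symm_apply]
      have hℓ0W0 : ℓ0 ∈ W0 := huW0 hℓ0u
      rw [hW0def, Finset.mem_biUnion] at hℓ0W0
      obtain ⟨k0, hk0f, hℓ0I⟩ := hℓ0W0
      have hk0w : w k0 ≠ 0 := (Finset.mem_filter.mp hk0f).2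
      have hc0 : (0:ℝ) < ((I k0).card : ℝ) := by exact_mod_cast (hIne k0).card_pos
      -- term at k0 is ≤ w k0 - ε
      have hterm : w k0 * ({ℓ | ℓ ∈ I k0 ∧ q ≤ qs ℓ}.ncard : ℝ) / ((I k0).card : ℝ)
          ≤ w k0 - ε := by
        have hsub : {ℓ | ℓ ∈ I k0 ∧ q ≤ qs ℓ} ⊆ ↑((I k0).erase ℓ0) := by
          intro ℓ hℓ
          simp only [Finset.coe_erase, Set.mem_diff, Set.mem_singleton_iff]
          refine ⟨hℓ.1, ?_⟩
          intro heq
          exact hqp (by rw [← hqsℓ0, ← heq]; exact hℓ.2)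
        have hncard : ({ℓ | ℓ ∈ I k0 ∧ q ≤ qs ℓ}.ncard : ℝ) ≤ ((I k0).card : ℝ) - 1 := by
          have h1 := Set.ncard_le_ncard hsub ((I k0).erase ℓ0).finite_toSet
          rw [Set.ncard_coe_finset, Finset.card_erase_of_mem hℓ0I] at h1
          have h2 : 1 ≤ (I k0).card := (hIne k0).card_pos
          have : ({ℓ | ℓ ∈ I k0 ∧ q ≤ qs ℓ}.ncard : ℝ) ≤ (((I k0).card - 1 : ℕ) : ℝ) := by
            exact_mod_cast h1
          rwa [Nat.cast_sub h2, Nat.cast_one] at this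
        have hε_le : ε ≤ w k0 / ((I k0).card : ℝ) :=
          Finset.inf'_le _ hk0f
        have hwk0 : 0 ≤ w k0 := hw k0
        clear hqp
        rw [div_le_iff₀ hc0]
        have : w k0 * (((I k0).card : ℝ) - 1) / ((I k0).card : ℝ)
            = w k0 - w k0 / ((I k0).card : ℝ) := by
          field_simp
        nlinarith [mul_le_mul_of_nonneg_left hncard hwk0,
          mul_le_mul_of_nonneg_right hε_le hc0.le,
          div_mul_cancel₀ (w k0) hc0.ne']
      calc (∑ k : K, w k * ({ℓ | ℓ ∈ I k ∧ q ≤ qs ℓ}.ncard : ℝ) / ((I k).card : ℝ))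
          = w k0 * ({ℓ | ℓ ∈ I k0 ∧ q ≤ qs ℓ}.ncard : ℝ) / ((I k0).card : ℝ)
            + ∑ k ∈ Finset.univ.erase k0,
              w k * ({ℓ | ℓ ∈ I k ∧ q ≤ qs ℓ}.ncard : ℝ) / ((I k).card : ℝ) := by
            rw [← Finset.add_sum_erase _ _ (Finset.mem_univ k0)]
        _ ≤ (w k0 - ε) + ∑ k ∈ Finset.univ.erase k0, w k :=
            add_le_add hterm (Finset.sum_le_sum fun k _ =>
              term_le_w _ (hw k) _ (hIne k) _ (fun ℓ hℓ => hℓ.1))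
        _ = 1 - ε := by
            have := Finset.add_sum_erase Finset.univ w (Finset.mem_univ k0)
            rw [hw1] at this
            clear hqp
            linarith
    have hle : Mnum w I Q ≤ 1 - ε := le_trans (csInf_le hMbdd ⟨qs, hqsQ, rfl⟩) hmu
    rw [hM] at hle
    linarith
  · -- linked → Mnum = 1
    intro hlinked
    have hall : ∀ x ∈ {x : ℝ | ∃ qs : ℕ → P,
        (∀ ℓ ∈ Finset.univ.biUnion I, qs ℓ ∈ Q) ∧ x = mu w I qs}, x = 1 := by
      rintro x ⟨qs, hqsQ, rfl⟩
      have hW0W : W0 ⊆ Finset.univ.biUnion I := by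
        intro ℓ hℓ
        rw [hW0def, Finset.mem_biUnion] at hℓ
        obtain ⟨k, hk, hℓk⟩ := hℓ
        exact Finset.mem_biUnion.mpr ⟨k, Finset.mem_univ k, hℓk⟩
      set F : Finset P := W0.image qs with hFdef
      have hFQ : (F : Set P) ⊆ Q := by
        intro p hp
        simp only [hFdef, Finset.coe_image, Set.mem_image, Finset.mem_coe] at hp
        obtain ⟨ℓ, hℓ, rfl⟩ := hp
        exact hqsQ ℓ (hW0W hℓ)
      obtain ⟨r, hr⟩ := hlinked F hFQ (Finset.card_image_le)
      have hrq : ∀ ℓ ∈ W0, r ≤ qs ℓ := fun ℓ hℓ =>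
        hr _ (Finset.mem_image_of_mem qs hℓ)
      apply le_antisymm (mu_le_one w hw hw1 I hIne qs)
      -- 1 ≤ mu: witness r
      have hval : (∑ k : K, w k * ({ℓ | ℓ ∈ I k ∧ r ≤ qs ℓ}.ncard : ℝ) / ((I k).card : ℝ)) = 1 := by
        rw [← hw1]
        apply Finset.sum_congr rfl
        intro k _
        by_cases hk : w k = 0
        · simp [hk]
        · have hkf : k ∈ Finset.univ.filter fun k => w k ≠ 0 := by simp [hk]
          have hset : {ℓ | ℓ ∈ I k ∧ r ≤ qs ℓ} = ↑(I k) := by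
            ext ℓ
            simp only [Set.mem_setOf_eq, Finset.coe_sort_coe, Finset.mem_coe]
            exact ⟨fun h => h.1, fun h => ⟨h, hrq ℓ (Finset.mem_biUnion.mpr ⟨k, hkf, h⟩)⟩⟩
          rw [hset, Set.ncard_coe_finset]
          have hc : ((I k).card : ℝ) ≠ 0 := by
            exact_mod_cast (hIne k).card_pos.ne'
          field_simp
      calc (1:ℝ) = ∑ k : K, w k * ({ℓ | ℓ ∈ I k ∧ r ≤ qs ℓ}.ncard : ℝ) / ((I k).card : ℝ) :=
            hval.symm
        _ ≤ mu w I qs := le_csSup (mu_bddAbove w hw hw1 I hIne qs) ⟨r, rfl⟩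
    apply le_antisymm
    · obtain ⟨x, hx⟩ := hMne
      exact le_of_le_of_eq (csInf_le hMbdd hx) (hall x hx)
    · exact le_csInf hMne fun x hx => (hall x hx).ge
end

section
/- Let K, L be finite sets and h : K → L a surjective function. Let Ξ be a probability finitely additive measure on P(K) and define Ξ_h on P(L) by Ξ_h(A) := Ξ(h⁻¹[A]). Let Ī = ⟨I_k : k ∈ K⟩ ∈ 𝐈_K^fin and define J_l := ⋃{ I_k : h(k) = l } and J̄ := ⟨J_l : l ∈ L⟩. Assume that h(k) = h(k') implies Ξ({k}) = Ξ({k'}) and |I_k| = |I_{k'}|. Then for every forcing notion P and every Q ⊆ P, M_Ī^Ξ(Q) ≥ M_J̄^{Ξ_h}(Q), and equality holds when h is bijective. -/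
open Classical

noncomputable def wPush {K L : Type*} [Fintype K] [DecidableEq L]
    (h : K → L) (w : K → ℝ) : L → ℝ :=
  fun l => ∑ k ∈ Finset.univ.filter (fun k => h k = l), w k

def IPush {K L : Type*} [Fintype K] [DecidableEq L]
    (h : K → L) (I : K → Finset ℕ) : L → Finset ℕ :=
  fun l => (Finset.univ.filter (fun k => h k = l)).biUnion I

lemma ncard_finset_filter {P : Type*} [Preorder P] (qs : ℕ → P) (q : P) (T : Finset ℕ) :
    ({ℓ | ℓ ∈ T ∧ q ≤ qs ℓ}.ncard : ℝ) = ((T.filter (fun ℓ => q ≤ qs ℓ)).card : ℝ) := by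
  congr 1
  rw [show {ℓ | ℓ ∈ T ∧ q ≤ qs ℓ} = ↑(T.filter (fun ℓ => q ≤ qs ℓ)) by
    ext ℓ; simp]
  exact Set.ncard_coe_finset _

lemma sum_eq_key {P : Type*} [Preorder P] {K L : Type*} [Fintype K] [Fintype L]
    [DecidableEq L]
    (h : K → L) (hsurj : Function.Surjective h) (w : K → ℝ)
    (I : K → Finset ℕ) (hIne : ∀ k, (I k).Nonempty)
    (hIdisj : ∀ k k', k ≠ k' → Disjoint (I k) (I k'))
    (hcompat : ∀ k k', h k = h k' → w k = w k' ∧ (I k).card = (I k').card)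
    (qs : ℕ → P) (q : P) :
    ∑ l : L, wPush h w l * ({ℓ | ℓ ∈ IPush h I l ∧ q ≤ qs ℓ}.ncard : ℝ) / ((IPush h I l).card : ℝ)
      = ∑ k : K, w k * ({ℓ | ℓ ∈ I k ∧ q ≤ qs ℓ}.ncard : ℝ) / ((I k).card : ℝ) := by
  rw [← Finset.sum_fiberwise_of_maps_to (g := h) (fun k _ => Finset.mem_univ (h k))
    (fun k => w k * ({ℓ | ℓ ∈ I k ∧ q ≤ qs ℓ}.ncard : ℝ) / ((I k).card : ℝ))]
  apply Finset.sum_congr rfl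
  intro l _
  obtain ⟨k0, hk0⟩ := hsurj l
  set F := Finset.univ.filter (fun k => h k = l) with hF
  have hk0F : k0 ∈ F := by simp [hF, hk0]
  have hdisjF : ∀ k ∈ F, ∀ k' ∈ F, k ≠ k' → Disjoint (I k) (I k') := by
    intro k _ k' _ hne; exact hIdisj k k' hne
  -- constants on fiber
  have hwconst : ∀ k ∈ F, w k = w k0 := by
    intro k hk; simp only [hF, Finset.mem_filter] at hk
    exact (hcompat k k0 (by rw [hk.2, hk0])).1
  have hcconst : ∀ k ∈ F, (I k).card = (I k0).card := by
    intro k hk; simp only [hF, Finset.mem_filter] at hk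
    exact (hcompat k k0 (by rw [hk.2, hk0])).2
  have hcard : ((IPush h I l).card : ℝ) = (F.card : ℝ) * ((I k0).card : ℝ) := by
    have : (IPush h I l).card = ∑ k ∈ F, (I k).card := Finset.card_biUnion hdisjF
    rw [this, Finset.sum_congr rfl hcconst, Finset.sum_const, smul_eq_mul]
    push_cast
    ring
  have hcnt : ({ℓ | ℓ ∈ IPush h I l ∧ q ≤ qs ℓ}.ncard : ℝ)
      = ∑ k ∈ F, ({ℓ | ℓ ∈ I k ∧ q ≤ qs ℓ}.ncard : ℝ) := by
    rw [ncard_finset_filter]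
    have : (IPush h I l).filter (fun ℓ => q ≤ qs ℓ)
        = F.biUnion (fun k => (I k).filter (fun ℓ => q ≤ qs ℓ)) := by
      simp [IPush, Finset.filter_biUnion, hF]
    rw [this, Finset.card_biUnion (by
      intro k hk k' hk' hne
      exact (hIdisj k k' hne).mono (Finset.filter_subset _ _) (Finset.filter_subset _ _))]
    push_cast
    exact Finset.sum_congr rfl fun k _ => (ncard_finset_filter qs q (I k)).symm
  have hwP : wPush h w l = (F.card : ℝ) * w k0 := by
    rw [wPush, ← hF, Finset.sum_congr rfl hwconst, Finset.sum_const, nsmul_eq_mul]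
  have hsum : ∑ k ∈ F, w k * ({ℓ | ℓ ∈ I k ∧ q ≤ qs ℓ}.ncard : ℝ) / ((I k).card : ℝ)
      = ∑ k ∈ F, w k0 * ({ℓ | ℓ ∈ I k ∧ q ≤ qs ℓ}.ncard : ℝ) / ((I k0).card : ℝ) :=
    Finset.sum_congr rfl (fun k hk => by rw [hwconst k hk, hcconst k hk])
  rw [hwP, hcard, hcnt, hsum, ← Finset.sum_div, ← Finset.mul_sum]
  have hn : ((F.card : ℝ)) ≠ 0 := by
    have : 0 < F.card := Finset.card_pos.mpr ⟨k0, hk0F⟩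
    positivity
  have hc : ((I k0).card : ℝ) ≠ 0 := by
    have : 0 < (I k0).card := Finset.card_pos.mpr (hIne k0)
    positivity
  field_simp

/-- Let `h : K → L` be surjective between finite sets, `Ξ` a probability fam on `P(K)`
(with weights `w`) and `Ξ_h` its pushforward on `P(L)`; let `Ī ∈ 𝐈_K^fin` and
`J̄ = ⟨J_l⟩` with `J_l = ⋃{I_k : h k = l}`.  If `h k = h k'` implies
`Ξ({k}) = Ξ({k'})` and `|I_k| = |I_{k'}|`, then `μ_Ī^Ξ(q̄) ≥ μ_J̄^{Ξ_h}(q̄)` for all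
`q̄ ∈ Q^W`, hence `M_Ī^Ξ(Q) ≥ M_J̄^{Ξ_h}(Q)`, with equality when `h` is bijective. -/
theorem stmt12 {P : Type*} [Preorder P] {K L : Type*} [Fintype K] [Fintype L]
    [DecidableEq L] [Nonempty K]
    (h : K → L) (hsurj : Function.Surjective h)
    (w : K → ℝ) (hw : ∀ k, 0 ≤ w k) (hw1 : (∑ k : K, w k) = 1)
    (I : K → Finset ℕ) (hIne : ∀ k, (I k).Nonempty)
    (hIdisj : ∀ k k', k ≠ k' → Disjoint (I k) (I k'))
    (hcompat : ∀ k k', h k = h k' → w k = w k' ∧ (I k).card = (I k').card)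
    (Q : Set P) (hQ : Q.Nonempty) :
    (∀ qs : ℕ → P, (∀ ℓ ∈ Finset.univ.biUnion I, qs ℓ ∈ Q) →
      mu (wPush h w) (IPush h I) qs ≤ mu w I qs) ∧
    Mnum (wPush h w) (IPush h I) Q ≤ Mnum w I Q ∧
    (Function.Bijective h → Mnum (wPush h w) (IPush h I) Q = Mnum w I Q) := by
  have hmu : ∀ qs : ℕ → P, mu (wPush h w) (IPush h I) qs = mu w I qs := by
    intro qs
    unfold mu
    congr 1
    ext x
    constructor
    · rintro ⟨q, rfl⟩
      exact ⟨q, sum_eq_key h hsurj w I hIne hIdisj hcompat qs q⟩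
    · rintro ⟨q, rfl⟩
      exact ⟨q, (sum_eq_key h hsurj w I hIne hIdisj hcompat qs q).symm⟩
  have hdom : Finset.univ.biUnion (IPush h I) = Finset.univ.biUnion I := by
    ext ℓ
    simp only [Finset.mem_biUnion, Finset.mem_univ, true_and, IPush, Finset.mem_filter]
    aesop
  have hM : Mnum (wPush h w) (IPush h I) Q = Mnum w I Q := by
    unfold Mnum
    congr 1
    ext x
    rw [hdom]
    constructor
    · rintro ⟨qs, hqs, rfl⟩; exact ⟨qs, hqs, hmu qs⟩
    · rintro ⟨qs, hqs, rfl⟩; exact ⟨qs, hqs, (hmu qs).symm⟩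
  exact ⟨fun qs _ => le_of_eq (hmu qs), le_of_eq hM, fun _ => hM⟩
end

section
/- (Engelking–Karłowicz theorem.) Let θ, μ, χ be cardinals with ℵ₀ ≤ θ⁻ ≤ μ and χ ≤ 2^μ, where θ⁻ := sup{ ν ∈ Card : ν < θ }. Then there exists a family 𝒢 ⊆ ^χ μ of functions with |𝒢| ≤ μ^{<θ} such that every function f : X → μ with X ∈ [χ]^{<θ} can be extended by some function in 𝒢. -/
/-!
Embed `X` into `Set Y`. For a function `f` on a set `s ⊆ X` with `|s| < θ`, some `w ⊆ Y` with
`|w| ≤ |s|²` separates the images of the points of `s`, so `f` is recorded by the table of pairs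
(trace on `w` of the image of `x`, `f x`) for `x ∈ s`. There are at most `μ^{<θ}` such pairs
`(w, table)`, and each one is read off as a total function on `X`.
-/

open Cardinal Set

namespace Cardinal

theorem self_le_powerlt {a : Cardinal.{u}} (ha : 2 ≤ a) (b : Cardinal.{u}) : b ≤ a ^< b := by
  conv_lhs => rw [← iSup_succ b]
  refine ciSup_le' fun c => ?_
  calc Order.succ c.1 ≤ 2 ^ c.1 := Order.succ_le_of_lt (cantor _)
    _ ≤ a ^ c.1 := power_le_power_right ha
    _ ≤ a ^< b := le_powerlt a c.2

theorem powerlt_le_powerlt_of_le_power {a b c d : Cardinal.{u}} (hc : ℵ₀ ≤ c) (hb : b < c)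
    (hd : d ≤ a ^ b) : d ^< c ≤ a ^< c :=
  powerlt_le.2 fun x hx => calc
    d ^ x ≤ (a ^ b) ^ x := power_le_power_right hd
    _ = a ^ (b * x) := power_mul.symm
    _ ≤ a ^< c := le_powerlt a (mul_lt_of_lt hc hb hx)

theorem mk_set_lt_le (α : Type u) [Infinite α] (θ : Cardinal.{u}) :
    #{t : Set α // #t < θ} ≤ θ * #α ^< θ := by
  let ν : θ.ord.ToType → Cardinal.{u} := fun i => (Ordinal.ToType.mk.symm i).1.card
  have hν : ∀ i, ν i < θ := fun i => lt_ord.1 (Ordinal.ToType.mk.symm i).2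
  have hcover : {t : Set α | #t < θ} ⊆ ⋃ i, {t | #t ≤ ν i} := fun t ht =>
    mem_iUnion.2 ⟨Ordinal.ToType.mk ⟨(#t).ord, ord_lt_ord.2 ht⟩, by simp [ν]⟩
  calc #{t : Set α // #t < θ} ≤ #(⋃ i, {t : Set α | #t ≤ ν i}) := mk_le_mk_of_subset hcover
    _ ≤ sum fun i => #{t : Set α // #t ≤ ν i} := mk_iUnion_le_sum_mk
    _ ≤ sum fun _ : θ.ord.ToType => #α ^< θ := sum_le_sum _ _ fun i =>
        (mk_bounded_set_le_of_infinite α _).trans (le_powerlt _ (hν i))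
    _ = θ * #α ^< θ := by rw [sum_const', mk_toType, card_ord]

end Cardinal

theorem Set.exists_separating_set {ι Y : Type u} (F : ι → Set Y) :
    ∃ w : Set Y, #w ≤ #ι * #ι ∧
      ∀ i j, ((↑) ⁻¹' F i : Set w) = (↑) ⁻¹' F j → F i = F j := by
  have hsep : ∀ p : {p : ι × ι // F p.1 ≠ F p.2}, ∃ y, ¬(y ∈ F p.1.1 ↔ y ∈ F p.1.2) :=
    fun p => by simpa [Set.ext_iff] using p.2
  choose d hd using hsep
  refine ⟨range d, ?_, fun i j hij => ?_⟩
  · calc #(range d) ≤ #{p : ι × ι // F p.1 ≠ F p.2} := mk_range_le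
      _ ≤ #(ι × ι) := mk_subtype_le _
      _ = #ι * #ι := by rw [mk_prod, lift_id]
  · by_contra hne
    exact hd ⟨(i, j), hne⟩ (Set.ext_iff.1 hij ⟨_, mem_range_self _⟩)

def TraceCode (Y : Type u) (θ : Cardinal.{u}) : Type u :=
  Σ w : {w : Set Y // #w < θ}, {A : Set (Set w.1 × Y) // #A < θ}

namespace TraceCode

variable {X Y : Type u} {θ : Cardinal.{u}}

noncomputable def decode [Nonempty Y] (e : X → Set Y) (c : TraceCode Y θ) (x : X) : Y :=
  Classical.epsilon fun y => (((↑) ⁻¹' e x : Set c.1.1), y) ∈ c.2.1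

theorem exists_eqOn_decode [Nonempty Y] (hθ : ℵ₀ ≤ θ) {e : X → Set Y} (he : e.Injective)
    {s : Set X} (hs : #s < θ) (f : X → Y) : ∃ c : TraceCode Y θ, EqOn (decode e c) f s := by
  obtain ⟨w, hw, hsep⟩ := exists_separating_set fun x : s => e x
  let A : Set (Set w × Y) := (fun x => ((↑) ⁻¹' e x, f x)) '' s
  refine ⟨⟨⟨w, hw.trans_lt (mul_lt_of_lt hθ hs hs)⟩, ⟨A, mk_image_le.trans_lt hs⟩⟩, fun x hx => ?_⟩
  obtain ⟨x', hx', hentry⟩ := Classical.epsilon_spec (p := fun y => (((↑) ⁻¹' e x : Set w), y) ∈ A)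
    ⟨f x, x, hx, rfl⟩
  have hx'x : x' = x := he (hsep ⟨x', hx'⟩ ⟨x, hx⟩ (Prod.ext_iff.1 hentry).1)
  subst hx'x
  exact (Prod.ext_iff.1 hentry).2.symm

theorem mk_le (hθ : ℵ₀ ≤ θ) (hY : ℵ₀ ≤ #Y) : #(TraceCode Y θ) ≤ #Y ^< θ := by
  have : Infinite Y := infinite_iff.2 hY
  set κ := #Y ^< θ
  have h2 : 2 ≤ #Y := natCast_lt_aleph0.le.trans hY
  have hθκ : θ ≤ κ := self_le_powerlt h2 θ
  have hκ : ℵ₀ ≤ κ := hθ.trans hθκ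
  have htable : ∀ w : {w : Set Y // #w < θ}, #{A : Set (Set w.1 × Y) // #A < θ} ≤ κ := by
    intro w
    have hsize : #(Set w.1 × Y) ≤ #Y ^ (#w.1 + 1) := calc
      #(Set w.1 × Y) = 2 ^ #w.1 * #Y := by rw [mk_prod, lift_id, lift_id, mk_set]
      _ ≤ #Y ^ #w.1 * #Y ^ (1 : Cardinal) := by
        rw [power_one]; gcongr; exact power_le_power_right h2
      _ = #Y ^ (#w.1 + 1) := (power_add ..).symm
    calc #{A : Set (Set w.1 × Y) // #A < θ} ≤ θ * #(Set w.1 × Y) ^< θ := mk_set_lt_le _ θ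
      _ ≤ κ * κ := mul_le_mul' hθκ (powerlt_le_powerlt_of_le_power hθ
          (add_lt_of_lt hθ w.2 (one_lt_aleph0.trans_le hθ)) hsize)
      _ = κ := mul_eq_self hκ
  calc #(TraceCode Y θ)
        = sum fun w : {w : Set Y // #w < θ} => #{A : Set (Set w.1 × Y) // #A < θ} := mk_sigma _
    _ ≤ sum fun _ : {w : Set Y // #w < θ} => κ := sum_le_sum _ _ htable
    _ ≤ (θ * κ) * κ := by rw [sum_const']; gcongr; exact mk_set_lt_le Y θ
    _ ≤ (κ * κ) * κ := by gcongr
    _ = κ := by rw [mul_eq_self hκ, mul_eq_self hκ]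

end TraceCode

/-- Engelking–Karłowicz theorem: if `ℵ₀ ≤ θ⁻ ≤ μ` and `χ ≤ 2^μ` (where
`θ⁻ = sup{ ν : ν < θ }`, `μ = #Y`, `χ = #X`), then there is a family
`𝒢 ⊆ ^χ μ` of functions with `|𝒢| ≤ μ^{<θ}` such that every function on a
subset of `X` of size `< θ` into `Y` extends to a member of `𝒢`. -/
theorem stmt13 {X Y : Type u} (θ : Cardinal.{u})
    (hθ : ℵ₀ ≤ sSup {ν : Cardinal.{u} | ν < θ})
    (hμ : sSup {ν : Cardinal.{u} | ν < θ} ≤ Cardinal.mk Y)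
    (hχ : Cardinal.mk X ≤ 2 ^ Cardinal.mk Y) :
    ∃ G : Set (X → Y), Cardinal.mk ↥G ≤ Cardinal.powerlt (Cardinal.mk Y) θ ∧
      ∀ s : Set X, Cardinal.mk ↥s < θ →
        ∀ f : X → Y, ∃ g ∈ G, ∀ x ∈ s, g x = f x := by
  have hθinf : ℵ₀ ≤ θ := hθ.trans (csSup_le' fun _ hν => le_of_lt hν)
  have hY : ℵ₀ ≤ #Y := hθ.trans hμ
  have : Nonempty Y := (infinite_iff.2 hY).nonempty
  obtain ⟨e⟩ : Nonempty (X ↪ Set Y) := by rwa [← le_def, mk_set]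
  refine ⟨range (TraceCode.decode e), mk_range_le.trans (TraceCode.mk_le hθinf hY), ?_⟩
  intro s hs f
  obtain ⟨c, hc⟩ := TraceCode.exists_eqOn_decode hθinf e.injective hs f
  exact ⟨_, mem_range_self c, fun x hx => hc hx⟩
end

section
/- Let T be the complete binary tree of height n*+1 (nodes are binary sequences of length ≤ n*) endowed with a probability tree structure, i.e., for each non-maximal node t a probability distribution on its two successors. Let Y : Lev_{n*}(T) → ℝ be defined by Y(t) := |{ n < n* : t(n) = 0 }|. If there exists p ∈ [0,1] such that for every non-maximal t, the probability p_t of the successor t⌢⟨0⟩ satisfies p ≤ p_t, then for every z ∈ ℝ, Pr[Y ≤ z] ≤ Pr[B_{n*,p} ≤ z], where B_{n*,p} has binomial distribution with parameters n* and p. -/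
/-!
Conditioning on the first step gives
`Pr_T[Y ≤ z] = f₀ · Pr_{T₀}[Y ≤ z - 1] + (1 - f₀) · Pr_{T₁}[Y ≤ z]`, where `T₀`, `T₁` are the
subtrees above `⟨0⟩` and `⟨1⟩`. The binomial distribution `B_{n,p}` is the law of `Y` on the tree
with constant transition probability `p`, and its distribution function `F` is monotone. By
induction the two terms are bounded by `F(z - 1)` and `F(z)`, and since `F(z - 1) ≤ F(z)`,
lowering `f₀` to `p` can only increase `f₀ F(z - 1) + (1 - f₀) F(z)`.
-/

open Finset

noncomputable def pathWeight (n : ℕ) (f : (m : ℕ) → (Fin m → Bool) → ℝ) (t : Fin n → Bool) : ℝ :=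
  ∏ m : Fin n,
    if t m = false then f m.1 (fun i => t (Fin.castLE m.isLt.le i))
    else 1 - f m.1 (fun i => t (Fin.castLE m.isLt.le i))

def zeroCount {n : ℕ} (t : Fin n → Bool) : ℕ := #{m | t m = false}

noncomputable def treeCdf (n : ℕ) (f : (m : ℕ) → (Fin m → Bool) → ℝ) (z : ℝ) : ℝ :=
  ∑ t with (zeroCount t : ℝ) ≤ z, pathWeight n f t

def subtree (f : (m : ℕ) → (Fin m → Bool) → ℝ) (b : Bool) : (m : ℕ) → (Fin m → Bool) → ℝ :=
  fun m s => f (m + 1) (Fin.cons b s)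

theorem Fin.cons_castLE {α : Type*} {m n : ℕ} (h : m + 1 ≤ n + 1) (b : α) (s : Fin n → α) :
    (fun i => (Fin.cons b s : Fin (n + 1) → α) (Fin.castLE h i)) =
      Fin.cons b (fun j => s (Fin.castLE (by omega) j)) := by
  funext i
  induction i using Fin.cases <;> rfl

theorem pathWeight_cons (n : ℕ) (f : (m : ℕ) → (Fin m → Bool) → ℝ) (b : Bool) (s : Fin n → Bool) :
    pathWeight (n + 1) f (Fin.cons b s) =
      (if b = false then f 0 ![] else 1 - f 0 ![]) * pathWeight n (subtree f b) s := by
  rw [pathWeight, Fin.prod_univ_succ]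
  congr 1
  · simp only [Fin.cons_zero, Fin.val_zero]
    congr!
  · refine prod_congr rfl fun m _ => ?_
    simp only [Fin.cons_succ, Fin.val_succ, Fin.cons_castLE, subtree]

theorem zeroCount_cons_false {n : ℕ} (s : Fin n → Bool) :
    zeroCount (Fin.cons false s : Fin (n + 1) → Bool) = zeroCount s + 1 := by
  simp only [zeroCount, card_filter, Fin.sum_univ_succ, Fin.cons_zero, Fin.cons_succ]
  simp [add_comm]

theorem zeroCount_cons_true {n : ℕ} (s : Fin n → Bool) :
    zeroCount (Fin.cons true s : Fin (n + 1) → Bool) = zeroCount s := by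
  simp only [zeroCount, card_filter, Fin.sum_univ_succ, Fin.cons_zero, Fin.cons_succ]
  simp

theorem treeCdf_succ (n : ℕ) (f : (m : ℕ) → (Fin m → Bool) → ℝ) (z : ℝ) :
    treeCdf (n + 1) f z =
      f 0 ![] * treeCdf n (subtree f false) (z - 1) +
        (1 - f 0 ![]) * treeCdf n (subtree f true) z := by
  simp only [treeCdf, sum_filter, mul_sum]
  rw [← (Fin.consEquiv fun _ => Bool).sum_comp, Fintype.sum_prod_type, Fintype.sum_bool]
  simp only [Equiv.coe_fn_mk, Fin.consEquiv, pathWeight_cons, zeroCount_cons_false,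
    zeroCount_cons_true, Nat.cast_add_one, le_sub_iff_add_le, mul_ite, mul_zero,
    Bool.true_eq_false, if_true, if_false]
  ring

theorem pathWeight_nonneg {n : ℕ} {f : (m : ℕ) → (Fin m → Bool) → ℝ}
    (hf : ∀ m < n, ∀ s : Fin m → Bool, 0 ≤ f m s ∧ f m s ≤ 1) (t : Fin n → Bool) :
    0 ≤ pathWeight n f t :=
  prod_nonneg fun m _ => by
    obtain ⟨h₀, h₁⟩ := hf m m.isLt fun i => t (Fin.castLE m.isLt.le i)
    split_ifs <;> linarith

theorem treeCdf_mono {n : ℕ} {f : (m : ℕ) → (Fin m → Bool) → ℝ}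
    (hf : ∀ m < n, ∀ s : Fin m → Bool, 0 ≤ f m s ∧ f m s ≤ 1) : Monotone (treeCdf n f) :=
  fun _ _ hz => sum_le_sum_of_subset_of_nonneg (monotone_filter_right _ fun _ _ ht => ht.trans hz)
    fun t _ _ => pathWeight_nonneg hf t

theorem pathWeight_const (n : ℕ) (p : ℝ) (t : Fin n → Bool) :
    pathWeight n (fun _ _ => p) t = p ^ zeroCount t * (1 - p) ^ (n - zeroCount t) := by
  have hcard := card_filter_add_card_filter_not (s := univ) fun m => t m = false
  rw [card_univ, Fintype.card_fin] at hcard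
  rw [pathWeight, prod_ite, prod_const, prod_const, zeroCount]
  congr 2
  omega

theorem sum_zeroCount_eq_sum_card {n : ℕ} {M : Type*} [AddCommMonoid M] (g : ℕ → M) :
    ∑ t : Fin n → Bool, g (zeroCount t) = ∑ s : Finset (Fin n), g #s :=
  Fintype.sum_equiv ⟨fun t => univ.filter (t · = false), fun s m => decide (m ∉ s),
      fun t => by ext; simp, fun s => by ext; simp⟩ _ _ fun _ => rfl

theorem treeCdf_const (n : ℕ) (p z : ℝ) :
    treeCdf n (fun _ _ => p) z =
      ∑ i ∈ (range (n + 1)).filter fun i : ℕ => (i : ℝ) ≤ z,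
        (n.choose i : ℝ) * p ^ i * (1 - p) ^ (n - i) := by
  let g (i : ℕ) : ℝ := if (i : ℝ) ≤ z then p ^ i * (1 - p) ^ (n - i) else 0
  calc treeCdf n (fun _ _ => p) z = ∑ t : Fin n → Bool, g (zeroCount t) := by
        simp only [treeCdf, sum_filter, pathWeight_const, g]
    _ = ∑ i ∈ range (n + 1), n.choose i • g i := by
        rw [sum_zeroCount_eq_sum_card, ← powerset_univ, sum_powerset_apply_card g, card_univ,
          Fintype.card_fin]
    _ = _ := by simp only [sum_filter, g, nsmul_eq_mul, mul_ite, mul_zero, mul_assoc]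

theorem treeCdf_le_treeCdf_const {n : ℕ} {f : (m : ℕ) → (Fin m → Bool) → ℝ} {p : ℝ}
    (hp : 0 ≤ p)
    (hf : ∀ m < n, ∀ s : Fin m → Bool, f m s ≤ 1 ∧ p ≤ f m s) (z : ℝ) :
    treeCdf n f z ≤ treeCdf n (fun _ _ => p) z := by
  induction n generalizing f z with
  | zero => simp [treeCdf, pathWeight]
  | succ n ih =>
    obtain ⟨hf₁, hpf⟩ := hf 0 n.succ_pos ![]
    have hsub (b : Bool) :
        ∀ m < n, ∀ s : Fin m → Bool, subtree f b m s ≤ 1 ∧ p ≤ subtree f b m s :=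
      fun m _ s => hf (m + 1) (by omega) _
    have hA := ih (hsub false) (z - 1)
    have hB := ih (hsub true) z
    have hz : treeCdf n (fun _ _ => p) (z - 1) ≤ treeCdf n (fun _ _ => p) z :=
      treeCdf_mono (fun _ _ _ => ⟨hp, hpf.trans hf₁⟩) (sub_le_self z zero_le_one)
    rw [treeCdf_succ, treeCdf_succ]
    calc _ ≤ f 0 ![] * treeCdf n (fun _ _ => p) (z - 1) +
            (1 - f 0 ![]) * treeCdf n (fun _ _ => p) z := by
          gcongr; linarith
      _ ≤ p * treeCdf n (fun _ _ => p) (z - 1) + (1 - p) * treeCdf n (fun _ _ => p) z := by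
          linarith [mul_nonneg (sub_nonneg.2 hpf) (sub_nonneg.2 hz)]
      _ = _ := rfl

theorem stmt15_general (nstar : ℕ) (f : (m : ℕ) → (Fin m → Bool) → ℝ) (p : ℝ)
    (hp0 : 0 ≤ p)
    (hf : ∀ m, m < nstar → ∀ t : Fin m → Bool, f m t ≤ 1 ∧ p ≤ f m t) :
    ∀ z : ℝ,
      (∑ t ∈ Finset.univ.filter (fun t : Fin nstar → Bool =>
          (((Finset.univ.filter fun m : Fin nstar => t m = false).card : ℝ) ≤ z)),
        ∏ m : Fin nstar,
          (if t m = false then f m.1 (fun i => t (Fin.castLE m.isLt.le i))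
           else 1 - f m.1 (fun i => t (Fin.castLE m.isLt.le i)))) ≤
      ∑ i ∈ (Finset.range (nstar + 1)).filter (fun i : ℕ => (i : ℝ) ≤ z),
        (nstar.choose i : ℝ) * p ^ i * (1 - p) ^ (nstar - i) := fun z =>
  treeCdf_const nstar p z ▸ treeCdf_le_treeCdf_const hp0 hf z

/-- Comparison with the binomial distribution in probability trees: let `T` be the
complete binary tree of height `nstar + 1` with a probability tree structure, where
the node `t` of length `m < nstar` gives probability `f m t` to its successor
`t⌢⟨0⟩` (and `1 - f m t` to `t⌢⟨1⟩`, here `false` plays the role of `0`).  The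
induced measure of a top-level node `t : Fin nstar → Bool` is the product of the
transition probabilities along its path.  Let `Y t = |{ m < nstar : t m = 0 }|`.
If `p ∈ [0,1]` and `p ≤ f m t` for every non-maximal node, then for every `z ∈ ℝ`,
`Pr[Y ≤ z] ≤ Pr[B_{nstar, p} ≤ z]` where `B_{nstar,p}` is binomial. -/
theorem stmt15 (nstar : ℕ) (f : (m : ℕ) → (Fin m → Bool) → ℝ) (p : ℝ)
    (hp0 : 0 ≤ p) (hp1 : p ≤ 1)
    (hf : ∀ m, m < nstar → ∀ t : Fin m → Bool, f m t ≤ 1 ∧ p ≤ f m t) :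
    ∀ z : ℝ,
      (∑ t ∈ Finset.univ.filter (fun t : Fin nstar → Bool =>
          (((Finset.univ.filter fun m : Fin nstar => t m = false).card : ℝ) ≤ z)),
        ∏ m : Fin nstar,
          (if t m = false then f m.1 (fun i => t (Fin.castLE m.isLt.le i))
           else 1 - f m.1 (fun i => t (Fin.castLE m.isLt.le i)))) ≤
      ∑ i ∈ (Finset.range (nstar + 1)).filter (fun i : ℕ => (i : ℝ) ≤ z),
        (nstar.choose i : ℝ) * p ^ i * (1 - p) ^ (nstar - i) :=
  stmt15_general nstar f p hp0 hf
end

section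
/- Let P be a forcing notion, K a set, Ξ a probability finitely additive measure on P(K), Ī ∈ 𝐈_K^fin, ε₀ ∈ [0,1), and Q ⊆ P. Suppose Ξ({k}) / |I_k| < 1 − ε₀ for all k ∈ K. If Q is (Ξ, Ī, ε₀)-linked, then Q does not contain an antichain of size |W|, where W = ⋃_k I_k. -/
/-- `Ξ` is a finitely additive probability measure on the powerset of `K`. -/
def IsProbFam {K : Type*} (Ξ : Set K → ℝ) : Prop :=
  Ξ ∅ = 0 ∧ Ξ Set.univ = 1 ∧ (∀ A, 0 ≤ Ξ A) ∧
    ∀ A B : Set K, Disjoint A B → Ξ (A ∪ B) = Ξ A + Ξ B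

/-- `frac π q' qs k = |{ℓ ∈ I_k : q' ≤ qs ℓ}| / |I_k|`, where the family
`Ī = ⟨I_k : k ∈ K⟩` of finite nonempty pairwise disjoint sets is represented by
the fibration `π : W → K` (so `I_k` is the fiber of `π` over `k`). -/
noncomputable def frac {P W K : Type*} [Preorder P] (π : W → K)
    (q' : P) (qs : W → P) (k : K) : ℝ :=
  (({ℓ | π ℓ = k ∧ q' ≤ qs ℓ}.ncard : ℝ)) / (({ℓ | π ℓ = k}.ncard : ℝ))

/-- `Q ⊆ P` is `(Ξ, Ī, ε₀)`-linked, witnessed by the limit function `lim`.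
Since the original definition is phrased via `P`-names of fams in generic
extensions, we use here its forcing-free combinatorial characterization
(Theorem i6(c) of the paper, which requires no `uap` assumption): for any
finitely many sequences `qs i ∈ Q^W`, any finite partition `Pa` of `K`, any
`ε > 0` and any `q ∈ P` below all the limits `lim (qs i)`, there are a
nonempty finite `u ⊆ K`, a probability measure `ν` on `P(u)` and `q' ≤ q`
such that `ν` approximates `Ξ` on the partition up to `ε` and
`∫_u |{ℓ ∈ I_k : q' ≤ qs i ℓ}|/|I_k| dν(k) > 1 - ε₀ - ε` for each `i`. -/
def FamLinked {P W K : Type*} [Preorder P] (Ξ : Set K → ℝ) (π : W → K) (ε₀ : ℝ)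
    (Q : Set P) (lim : (W → P) → P) : Prop :=
  ∀ (m : ℕ) (qs : Fin m → W → P), (∀ i ℓ, qs i ℓ ∈ Q) →
  ∀ Pa : Finset (Set K), (∀ A ∈ Pa, ∀ B ∈ Pa, A ≠ B → Disjoint A B) →
    ⋃₀ (Pa : Set (Set K)) = Set.univ →
  ∀ ε : ℝ, 0 < ε → ∀ q : P, (∀ i, q ≤ lim (qs i)) →
  ∃ u : Finset K, u.Nonempty ∧ ∃ ν : K → ℝ, (∀ k, 0 ≤ ν k) ∧ (∑ k ∈ u, ν k) = 1 ∧
  ∃ q' : P, q' ≤ q ∧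
    (∀ A ∈ Pa, |(∑ k ∈ u, A.indicator ν k) - Ξ A| < ε) ∧
    ∀ i, 1 - ε₀ - ε < ∑ k ∈ u, ν k * frac π q' (qs i) k

/-- If `Ξ({k})/|I_k| < 1 − ε₀` for all `k ∈ K` and `Q` is `(Ξ, Ī, ε₀)`-linked,
then `Q` contains no antichain of size `|W|` (an antichain of size `|W|` is an
injective `W`-indexed family of pairwise incompatible members of `Q`). -/
theorem stmt18 {P W K : Type*} [Preorder P] (Ξ : Set K → ℝ) (hΞ : IsProbFam Ξ)
    (π : W → K) (hfib : ∀ k : K, {ℓ | π ℓ = k}.Finite ∧ {ℓ | π ℓ = k}.Nonempty)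
    (ε₀ : ℝ) (hε₀ : 0 ≤ ε₀) (hε₁ : ε₀ < 1) (Q : Set P)
    (hsmall : ∀ k : K, Ξ {k} / ({ℓ | π ℓ = k}.ncard : ℝ) < 1 - ε₀)
    (hlink : ∃ lim : (W → P) → P, FamLinked Ξ π ε₀ Q lim) :
    ¬∃ f : W → P, (∀ ℓ, f ℓ ∈ Q) ∧ Function.Injective f ∧
      ∀ ℓ ℓ', ℓ ≠ ℓ' → ¬∃ r : P, r ≤ f ℓ ∧ r ≤ f ℓ' := by
  classical
  rintro ⟨f, hfQ, hinj, hinc⟩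
  obtain ⟨lim, hlink⟩ := hlink
  have huniq : ∀ (r : P) (ℓ ℓ' : W), r ≤ f ℓ → r ≤ f ℓ' → ℓ = ℓ' := by
    intro r ℓ ℓ' h h'
    by_contra hne
    exact hinc ℓ ℓ' hne ⟨r, h, h'⟩
  have hε₁' : (0:ℝ) < (1 - ε₀) / 2 := by linarith
  obtain ⟨u₁, -, ν₁, hν₁0, hν₁1, q₁, hq₁le, -, hint₁⟩ :=
    hlink 1 (fun _ => f) (fun _ ℓ => hfQ ℓ) {Set.univ}
      (by
        intro A hA B hB hAB
        simp only [Finset.mem_singleton] at hA hB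
        exact absurd (hA.trans hB.symm) hAB)
      (by simp)
      ((1 - ε₀) / 2) hε₁' (lim f) (fun _ => le_refl _)
  have hint₁' : 1 - ε₀ - (1 - ε₀) / 2 < ∑ k ∈ u₁, ν₁ k * frac π q₁ f k := hint₁ 0
  have hex : ∃ ℓ₁ : W, q₁ ≤ f ℓ₁ := by
    by_contra hno
    push_neg at hno
    have hz : ∀ k ∈ u₁, ν₁ k * frac π q₁ f k = 0 := by
      intro k _
      have he : {ℓ | π ℓ = k ∧ q₁ ≤ f ℓ} = (∅ : Set W) := by
        ext ℓ
        simp only [Set.mem_setOf_eq, Set.mem_empty_iff_false, iff_false, not_and]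
        intro _
        exact hno ℓ
      simp [frac, he]
    rw [Finset.sum_eq_zero hz] at hint₁'
    linarith
  obtain ⟨ℓ₁, hℓ₁⟩ := hex
  have hs := hsmall (π ℓ₁)
  have hnpos : 0 < ({ℓ | π ℓ = π ℓ₁}.ncard) := (Set.ncard_pos (hfib (π ℓ₁)).1).mpr (hfib (π ℓ₁)).2
  set k₀ := π ℓ₁ with hk₀
  set n : ℝ := (({ℓ | π ℓ = k₀}.ncard : ℝ)) with hn
  have hn1 : (1:ℝ) ≤ n := by
    rw [hn]; exact_mod_cast hnpos
  have hn0 : (0:ℝ) < n := lt_of_lt_of_le one_pos hn1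
  set gap : ℝ := 1 - ε₀ - Ξ {k₀} / n with hgap_def
  have hgap : 0 < gap := by
    rw [hgap_def]; linarith
  obtain ⟨u₂, -, ν₂, hν₂0, hν₂1, q₂, hq₂le, happrox₂, hint₂⟩ :=
    hlink 1 (fun _ => f) (fun _ ℓ => hfQ ℓ) {({k₀} : Set K), ({k₀}ᶜ : Set K)}
      (by
        intro A hA B hB hAB
        simp only [Finset.mem_insert, Finset.mem_singleton] at hA hB
        rcases hA with rfl | rfl <;> rcases hB with rfl | rfl
        · exact absurd rfl hAB
        · exact disjoint_compl_right
        · exact disjoint_compl_left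
        · exact absurd rfl hAB)
      (by simp)
      (gap / 2) (by linarith) q₁ (fun _ => hq₁le)
  have hint₂' : 1 - ε₀ - gap / 2 < ∑ k ∈ u₂, ν₂ k * frac π q₂ f k := hint₂ 0
  have hq₂f : q₂ ≤ f ℓ₁ := le_trans hq₂le hℓ₁
  have hsing : {ℓ | π ℓ = k₀ ∧ q₂ ≤ f ℓ} = ({ℓ₁} : Set W) := by
    ext ℓ
    simp only [Set.mem_setOf_eq, Set.mem_singleton_iff]
    constructor
    · rintro ⟨-, h⟩
      exact huniq q₂ ℓ ℓ₁ h hq₂f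
    · rintro rfl
      exact ⟨hk₀.symm ▸ rfl, hq₂f⟩
  have htermeq : ∀ k ∈ u₂, ν₂ k * frac π q₂ f k = (({k₀} : Set K).indicator ν₂ k) / n := by
    intro k _
    by_cases hk : k = k₀
    · subst hk
      rw [Set.indicator_of_mem (Set.mem_singleton _)]
      rw [frac, hsing, Set.ncard_singleton, ← hn]
      push_cast
      rw [mul_one_div]
    · rw [Set.indicator_of_notMem (by simpa using hk)]
      have he : {ℓ | π ℓ = k ∧ q₂ ≤ f ℓ} = (∅ : Set W) := by
        ext ℓ
        simp only [Set.mem_setOf_eq, Set.mem_empty_iff_false, iff_false, not_and]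
        intro hπ h
        apply hk
        rw [← hπ, huniq q₂ ℓ ℓ₁ h hq₂f, ← hk₀]
      simp [frac, he]
  rw [Finset.sum_congr rfl htermeq, ← Finset.sum_div] at hint₂'
  have happ := happrox₂ ({k₀} : Set K) (Finset.mem_insert_self _ _)
  have hS : (∑ k ∈ u₂, (({k₀} : Set K).indicator ν₂ k)) < Ξ {k₀} + gap / 2 := by
    have h2 := (abs_lt.mp happ).2
    linarith
  have hΞn : Ξ {k₀} = (1 - ε₀ - gap) * n := by
    have h1 : (1 - ε₀ - gap) = Ξ {k₀} / n := by rw [hgap_def]; ring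
    rw [h1, div_mul_cancel₀ _ (ne_of_gt hn0)]
  have hfin : (1 - ε₀ - gap / 2) * n < ∑ k ∈ u₂, (({k₀} : Set K).indicator ν₂ k) :=
    (lt_div_iff₀ hn0).mp hint₂'
  have key2 : 0 ≤ gap * (n - 1) := mul_nonneg hgap.le (by linarith)
  clear_value k₀ n gap
  linarith [key2, hfin, hS, hΞn]
end

section
/- Let P be a forcing notion and ⟨T_i : i ∈ I⟩ a sequence of well-pruned subtrees of ^{<ω}ω in the ground model V. Let G be P-generic over V and suppose that ⋂_{i∈I} [T_i] computed in V[G] is countable. Then ⋂_{i∈I} [T_i]^{V[G]} = ⋂_{i∈I} [T_i]^{V}, i.e., every branch through all the T_i in the extension already lies in the ground model. -/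
/-- Absoluteness of countable intersections of branch sets of ground-model trees
(Lemma a58 of the paper), rendered via a minimal axiomatization of forcing names.

`T i ⊆ List ℕ` are well-pruned ground-model trees.  The set
`C = { x : ∀ i n, x↾n ∈ T i }` is `⋂_i [T_i]` computed in the ground model; the
hypothesis `hcount` (it is countable) corresponds to the assumption that
`⋂_i [T_i]^{V[G]}` is countable (only countability of the ground intersection,
with a ground enumeration, is used in the proof).

A `P`-name `ẋ` for an element of `⋂_i [T_i]^{V[G]}` is axiomatized by the
relation `Fo q n m` ("`q ⊩ ẋ(n) = m`"): it is monotone (`hmono`), compatible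
conditions do not force different values (`hfun`), every coordinate is densely
decided (`hdense`), and every decided initial segment lies in all trees
(`htreeF`, i.e. `⊩ ẋ ∈ ⋂_i [T_i]`).

The conclusion states that `ẋ` is forced to be a ground-model branch: below any
condition `p` there are `q ≤ p` and `x ∈ ⋂_i [T_i]^V` such that `q ⊩ ẋ = x`
(no extension of `q` forces a value of `ẋ` disagreeing with `x`).  This is the
name-level content of `⋂_i [T_i]^{V[G]} = ⋂_i [T_i]^V`. -/
theorem stmt19 {P : Type*} [Preorder P] {I : Type*} (T : I → Set (List ℕ))
    (htree : ∀ i, ∀ l ∈ T i, ∀ l' : List ℕ, l' <+: l → l' ∈ T i)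
    (hpruned : ∀ i, ∀ l ∈ T i, ∃ m : ℕ, l ++ [m] ∈ T i)
    (hcount : {x : ℕ → ℕ | ∀ i, ∀ n : ℕ, (List.ofFn fun j : Fin n => x j) ∈ T i}.Countable)
    (Fo : P → ℕ → ℕ → Prop)
    (hmono : ∀ q q' : P, q' ≤ q → ∀ n m, Fo q n m → Fo q' n m)
    (hfun : ∀ q q' r : P, r ≤ q → r ≤ q' → ∀ n m m', Fo q n m → Fo q' n m' → m = m')
    (hdense : ∀ q : P, ∀ n : ℕ, ∃ q' ≤ q, ∃ m, Fo q' n m)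
    (htreeF : ∀ q : P, ∀ l : List ℕ, (∀ j : Fin l.length, Fo q j (l.get j)) → ∀ i, l ∈ T i) :
    ∀ p : P, ∃ q ≤ p, ∃ x : ℕ → ℕ,
      (∀ i, ∀ n : ℕ, (List.ofFn fun j : Fin n => x j) ∈ T i) ∧
      ∀ q' ≤ q, ∀ n m, Fo q' n m → m = x n := by
  classical
  intro p
  by_contra hcon
  push_neg at hcon
  -- hcon : ∀ q ≤ p, ∀ x, (x ∈ C) → ∃ q' ≤ q, ∃ n m, Fo q' n m ∧ m ≠ x n
  -- extension lemma: decide all coordinates < n below any condition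
  have ext : ∀ n : ℕ, ∀ q : P, ∃ q', q' ≤ q ∧ ∃ f : ℕ → ℕ, ∀ j < n, Fo q' j (f j) := by
    intro n
    induction n with
    | zero => exact fun q => ⟨q, le_refl q, fun _ => 0, by omega⟩
    | succ n ih =>
      intro q
      obtain ⟨q', hq', f, hf⟩ := ih q
      obtain ⟨q'', hq'', m, hm⟩ := hdense q' n
      refine ⟨q'', hq''.trans hq', Function.update f n m, ?_⟩
      intro j hj
      rcases Nat.lt_succ_iff_lt_or_eq.mp hj with h | h
      · rw [Function.update_of_ne (by omega)]
        exact hmono q' q'' hq'' j (f j) (hf j h)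
      · subst h
        rw [Function.update_self]
        exact hm
  -- choice functions for hdense
  choose Q hQle M hM using hdense
  -- splitting lemma
  have split : ∀ q : P, q ≤ p → ∃ n m₀ m₁ q₀ q₁, q₀ ≤ q ∧ q₁ ≤ q ∧ m₀ ≠ m₁ ∧
      Fo q₀ n m₀ ∧ Fo q₁ n m₁ := by
    intro q hq
    by_contra hs
    have cons : ∀ q₀ q₁, q₀ ≤ q → q₁ ≤ q → ∀ n m₀ m₁, Fo q₀ n m₀ → Fo q₁ n m₁ → m₀ = m₁ := by
      intro q₀ q₁ h₀ h₁ n m₀ m₁ hf₀ hf₁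
      by_contra hne
      exact hs ⟨n, m₀, m₁, q₀, q₁, h₀, h₁, hne, hf₀, hf₁⟩
    set x : ℕ → ℕ := fun n => M q n with hx
    have hxC : ∀ i, ∀ n : ℕ, (List.ofFn fun j : Fin n => x j) ∈ T i := by
      intro i n
      obtain ⟨q', hq', f, hf⟩ := ext n q
      apply htreeF q'
      intro j
      have hjlt : (j : ℕ) < n := by simpa using j.isLt
      have h1 : Fo q' j (f j) := hf j hjlt
      have h2 : f j = x j := cons q' (Q q j) hq' (hQle q j) j (f j) (x j) h1 (hM q j)
      have hget : (List.ofFn fun j : Fin n => x j).get j = x j := by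
        simp [List.get_ofFn]
      rw [hget, ← h2]
      exact h1
    obtain ⟨q', hq', n, m, hFo, hne⟩ := hcon q hq x hxC
    exact hne (cons q' (Q q n) hq' (hQle q n) n m (x n) hFo (hM q n))
  -- conditions below p with splitting data, deciding coordinates < k
  have step : ∀ (q : {r : P // r ≤ p}) (k : ℕ), ∃ d : Bool → {r : P // r ≤ p},
      ∃ n : ℕ, ∃ v : Bool → ℕ, ∃ f : Bool → ℕ → ℕ,
      (∀ b, (d b).1 ≤ q.1) ∧ v true ≠ v false ∧ (∀ b, Fo (d b).1 n (v b)) ∧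
      (∀ b, ∀ j < k, Fo (d b).1 j (f b j)) := by
    rintro ⟨q, hq⟩ k
    obtain ⟨n, m₀, m₁, q₀, q₁, h₀, h₁, hne, hf₀, hf₁⟩ := split q hq
    obtain ⟨q₀', h₀', f₀, hff₀⟩ := ext k q₀
    obtain ⟨q₁', h₁', f₁, hff₁⟩ := ext k q₁
    refine ⟨fun b => if b then ⟨q₀', (h₀'.trans h₀).trans hq⟩ else ⟨q₁', (h₁'.trans h₁).trans hq⟩,
      n, fun b => if b then m₀ else m₁, fun b => if b then f₀ else f₁, ?_, by simpa using hne, ?_, ?_⟩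
    · intro b; cases b <;> simp [h₀'.trans h₀, h₁'.trans h₁]
    · intro b; cases b <;> simp
      · exact hmono q₁ q₁' h₁' n m₁ hf₁
      · exact hmono q₀ q₀' h₀' n m₀ hf₀
    · intro b j hj; cases b <;> simp
      · exact hff₁ j hj
      · exact hff₀ j hj
  choose d nn vv ff hdle hvne hFov hFof using step
  -- the tree of conditions, indexed by reversed binary strings
  set A : List Bool → {r : P // r ≤ p} :=
    fun s => List.rec (⟨p, le_refl p⟩ : {r : P // r ≤ p})
      (fun b s' ih => d ih (s'.length + 1) b) s with hA
  have hAcons : ∀ b s, A (b :: s) = d (A s) (s.length + 1) b := fun b s => rfl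
  -- the node of σ at level k
  set seg : (ℕ → Bool) → ℕ → List Bool := fun σ k => ((List.range k).reverse.map σ) with hseg
  have hseglen : ∀ σ k, (seg σ k).length = k := by intro σ k; simp [hseg]
  have hsegsucc : ∀ σ k, seg σ (k + 1) = σ k :: seg σ k := by
    intro σ k
    simp [hseg, List.range_succ]
  set B : (ℕ → Bool) → ℕ → P := fun σ k => (A (seg σ k)).1 with hB
  have hBsucc : ∀ σ k, B σ (k + 1) = (d (A (seg σ k)) (k + 1) (σ k)).1 := by
    intro σ k
    rw [hB]
    simp only
    rw [hsegsucc, hAcons, hseglen]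
  have hBle : ∀ σ k, B σ (k + 1) ≤ B σ k := by
    intro σ k
    rw [hBsucc]
    exact hdle (A (seg σ k)) (k + 1) (σ k)
  have hBmono : ∀ σ k k', k ≤ k' → B σ k' ≤ B σ k := by
    intro σ k k' h
    induction k' with
    | zero => simp_all
    | succ k' ih =>
      rcases Nat.lt_succ_iff_lt_or_eq.mp (Nat.lt_succ_of_le h) with h' | h'
      · exact (hBle σ k').trans (ih (by omega))
      · subst h'; exact le_refl _
  -- forced values along a chain agree
  have chainfun : ∀ σ k k' n m m', Fo (B σ k) n m → Fo (B σ k') n m' → m = m' := by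
    intro σ k k' n m m' h h'
    exact hfun (B σ k) (B σ k') (B σ (max k k')) (hBmono σ k _ (le_max_left _ _))
      (hBmono σ k' _ (le_max_right _ _)) n m m' h h'
  -- the branch determined by σ
  set X : (ℕ → Bool) → ℕ → ℕ := fun σ n => ff (A (seg σ n)) (n + 1) (σ n) n with hX
  have hXFo : ∀ σ n, Fo (B σ (n + 1)) n (X σ n) := by
    intro σ n
    rw [hBsucc]
    exact hFof (A (seg σ n)) (n + 1) (σ n) n (by omega)
  -- every X σ is in C
  have hXC : ∀ σ, ∀ i, ∀ n : ℕ, (List.ofFn fun j : Fin n => X σ j) ∈ T i := by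
    intro σ i n
    apply htreeF (B σ (n + 1))
    intro j
    have hjlt : (j : ℕ) < n := by simpa using j.isLt
    have h1 : Fo (B σ (n + 1)) j (ff (A (seg σ n)) (n + 1) (σ n) j) := by
      rw [hBsucc]
      exact hFof (A (seg σ n)) (n + 1) (σ n) j (by omega)
    have h2 : ff (A (seg σ n)) (n + 1) (σ n) j = X σ j :=
      chainfun σ (n + 1) ((j : ℕ) + 1) j _ _ h1 (hXFo σ j)
    have hget : (List.ofFn fun j : Fin n => X σ j).get j = X σ j := by
      simp [List.get_ofFn]
    rw [hget, ← h2]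
    exact h1
  -- X is injective
  have hXinj : Function.Injective X := by
    intro σ τ hxy
    by_contra hne
    obtain ⟨k, hk⟩ := Function.ne_iff.mp hne
    -- take least k
    have hex : ∃ k, σ k ≠ τ k := ⟨k, hk⟩
    set k₀ := Nat.find hex with hk₀
    have hkne : σ k₀ ≠ τ k₀ := Nat.find_spec hex
    have hkmin : ∀ j < k₀, σ j = τ j := fun j hj => by
      have := Nat.find_min hex hj; simpa using this
    have hsegeq : seg σ k₀ = seg τ k₀ := by
      rw [hseg]
      simp only
      apply List.map_congr_left
      intro a ha
      simp only [List.mem_reverse, List.mem_range] at ha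
      exact hkmin a ha
    set n₀ := nn (A (seg σ k₀)) (k₀ + 1) with hn₀
    have hFσ : Fo (B σ (k₀ + 1)) n₀ (vv (A (seg σ k₀)) (k₀ + 1) (σ k₀)) := by
      rw [hBsucc]
      exact hFov (A (seg σ k₀)) (k₀ + 1) (σ k₀)
    have hFτ : Fo (B τ (k₀ + 1)) n₀ (vv (A (seg σ k₀)) (k₀ + 1) (τ k₀)) := by
      rw [hBsucc, hsegeq]
      rw [hsegeq] at hn₀
      rw [hn₀]
      exact hFov (A (seg τ k₀)) (k₀ + 1) (τ k₀)
    have e1 : X σ n₀ = vv (A (seg σ k₀)) (k₀ + 1) (σ k₀) :=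
      chainfun σ (n₀ + 1) (k₀ + 1) n₀ _ _ (hXFo σ n₀) hFσ
    have e2 : X τ n₀ = vv (A (seg σ k₀)) (k₀ + 1) (τ k₀) :=
      chainfun τ (n₀ + 1) (k₀ + 1) n₀ _ _ (hXFo τ n₀) hFτ
    have e3 : X σ n₀ = X τ n₀ := congrFun hxy n₀
    have : vv (A (seg σ k₀)) (k₀ + 1) (σ k₀) = vv (A (seg σ k₀)) (k₀ + 1) (τ k₀) := by
      rw [← e1, ← e2, e3]
    have hvv := hvne (A (seg σ k₀)) (k₀ + 1)
    revert this hkne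
    cases hb : σ k₀ <;> cases hb' : τ k₀ <;> intro hkne this
    · exact hkne rfl
    · exact hvv this.symm
    · exact hvv this
    · exact hkne rfl
  -- contradiction with countability
  have : Countable (ℕ → Bool) := by
    have hc : Countable ↥{x : ℕ → ℕ | ∀ i, ∀ n : ℕ, (List.ofFn fun j : Fin n => x j) ∈ T i} :=
      hcount
    exact Function.Injective.countable
      (f := fun σ => (⟨X σ, hXC σ⟩ : {x : ℕ → ℕ | ∀ i, ∀ n : ℕ, (List.ofFn fun j : Fin n => x j) ∈ T i}))
      (fun a b hab => hXinj (congrArg Subtype.val hab))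
  obtain ⟨e, he⟩ := this.exists_injective_nat
  apply Function.cantor_injective (fun s : Set ℕ => e (fun n => decide (n ∈ s)))
  intro s t hst
  have h1 : (fun n => decide (n ∈ s)) = (fun n => decide (n ∈ t)) := he hst
  ext n
  have := congrFun h1 n
  simpa using this
end
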